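/- arXiv:2504.19196 — 13 statements merged into one kernel-verified Lean document; each statement's English description precedes it below -/
import Mathlib

section
/- If n is a positive composite number with n ≠ 4 and n ≠ 6, then g(n) < 2n. -/
/-- `grahamG n`: the least integer `s ≥ n` such that some finite set of
distinct integers contained in `[n, s]`, including both `n` and `s`,
has product a perfect square. -/
noncomputable def grahamG (n : ℕ) : ℕ :=
  sInf {s | n ≤ s ∧ ∃ S : Finset ℕ, n ∈ S ∧ s ∈ S ∧
    (∀ a ∈ S, n ≤ a ∧ a ≤ s) ∧ IsSquare (∏ a ∈ S, a)}

theorem stmt_3 (n : ℕ) (hcomp : ∃ a b : ℕ, 1 < a ∧ a ≤ b ∧ b < n ∧ n = a * b)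
    (h4 : n ≠ 4) (h6 : n ≠ 6) : grahamG n < 2 * n := by
  obtain ⟨a, b, ha, hab, hbn, hn⟩ := hcomp
  have hbpos : 0 < b := by omega
  rcases eq_or_lt_of_le hab with rfl | hlt
  · -- n is a perfect square: take S = {n}, s = n
    have hmem : n ∈ {s | n ≤ s ∧ ∃ S : Finset ℕ, n ∈ S ∧ s ∈ S ∧
        (∀ a ∈ S, n ≤ a ∧ a ≤ s) ∧ IsSquare (∏ a ∈ S, a)} := by
      refine ⟨le_refl n, {n}, Finset.mem_singleton_self n, Finset.mem_singleton_self n, ?_, ?_⟩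
      · intro x hx
        simp only [Finset.mem_singleton] at hx
        omega
      · rw [Finset.prod_singleton]
        exact ⟨a, hn⟩
    have := Nat.sInf_le hmem
    have hnpos : 0 < n := by omega
    calc grahamG n ≤ n := this
      _ < 2 * n := by omega
  · -- a < b
    have hb6 : ¬ (a = 2 ∧ b = 3) := by
      rintro ⟨rfl, rfl⟩; omega
    have key : a + b + 1 < a * b := by
      rcases Nat.lt_or_ge a 3 with h | h
      · have ha2 : a = 2 := by omega
        have hb4 : 4 ≤ b := by omega
        subst ha2
        omega
      · nlinarith
    set s := (a + 1) * (b + 1) with hs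
    have hs' : s = a * b + a + b + 1 := by ring
    have hslt : s < 2 * n := by rw [hn]; omega
    set S : Finset ℕ := insert (a * b) (insert (a * b + a) (insert (a * b + b) {(a+1)*(b+1)})) with hS
    have h1 : (a*b) ∉ (insert (a * b + a) (insert (a * b + b) ({(a+1)*(b+1)} : Finset ℕ))) := by
      simp only [Finset.mem_insert, Finset.mem_singleton]
      push_neg
      refine ⟨by omega, by omega, ?_⟩
      have : (a+1)*(b+1) = a*b + a + b + 1 := by ring
      omega
    have h2 : (a*b + a) ∉ (insert (a * b + b) ({(a+1)*(b+1)} : Finset ℕ)) := by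
      simp only [Finset.mem_insert, Finset.mem_singleton]
      push_neg
      refine ⟨by omega, ?_⟩
      have : (a+1)*(b+1) = a*b + a + b + 1 := by ring
      omega
    have h3 : (a*b + b) ∉ ({(a+1)*(b+1)} : Finset ℕ) := by
      simp only [Finset.mem_singleton]
      have : (a+1)*(b+1) = a*b + a + b + 1 := by ring
      omega
    have hprod : (∏ x ∈ S, x) = (a * b * (a+1) * (b+1)) * (a * b * (a+1) * (b+1)) := by
      rw [hS, Finset.prod_insert h1, Finset.prod_insert h2, Finset.prod_insert h3,
        Finset.prod_singleton]
      ring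
    have hmem : s ∈ {s | n ≤ s ∧ ∃ S : Finset ℕ, n ∈ S ∧ s ∈ S ∧
        (∀ a ∈ S, n ≤ a ∧ a ≤ s) ∧ IsSquare (∏ a ∈ S, a)} := by
      refine ⟨by rw [hn]; omega, S, ?_, ?_, ?_, ?_⟩
      · rw [hn, hS]; simp
      · rw [hS]; simp [hs]
      · intro x hx
        rw [hS] at hx
        simp only [Finset.mem_insert, Finset.mem_singleton] at hx
        have : (a+1)*(b+1) = a*b + a + b + 1 := by ring
        rcases hx with rfl | rfl | rfl | rfl <;> constructor <;> omega
      · rw [hprod]; exact ⟨_, rfl⟩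
    calc grahamG n ≤ s := Nat.sInf_le hmem
      _ < 2 * n := hslt
end

section
/- For a positive integer n, g(n) = 2n if and only if n is a prime greater than 3 or n = 6, where g(n) is the least integer s ≥ n such that some set of distinct integers in [n, s] containing n and s has product a perfect square. -/
private lemma graham_le {n s : ℕ} (hns : n ≤ s) (S : Finset ℕ) (h1 : n ∈ S) (h2 : s ∈ S)
    (h3 : ∀ a ∈ S, n ≤ a ∧ a ≤ s) (h4 : IsSquare (∏ a ∈ S, a)) : grahamG n ≤ s :=
  Nat.sInf_le ⟨hns, S, h1, h2, h3, h4⟩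

private lemma graham_nonempty (n : ℕ) (hn : 0 < n) :
    {s | n ≤ s ∧ ∃ S : Finset ℕ, n ∈ S ∧ s ∈ S ∧
      (∀ a ∈ S, n ≤ a ∧ a ≤ s) ∧ IsSquare (∏ a ∈ S, a)}.Nonempty := by
  refine ⟨4 * n, by omega, {n, 4 * n}, by simp, by simp, ?_, ?_⟩
  · intro a ha
    rcases Finset.mem_insert.1 ha with rfl | ha
    · omega
    · simp only [Finset.mem_singleton] at ha; omega
  · rw [Finset.prod_pair (by omega)]
    exact ⟨2 * n, by ring⟩

/-- if a prime exactly divides one element of `S` and divides no other, the product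
is not a square. -/
private lemma key_prime {q : ℕ} (hq : q.Prime) (S : Finset ℕ) (a : ℕ) (ha : a ∈ S)
    (hqa : q ∣ a) (hq2 : ¬ q * q ∣ a) (hother : ∀ b ∈ S, b ≠ a → ¬ q ∣ b) :
    ¬ IsSquare (∏ x ∈ S, x) := by
  rintro ⟨r, hr⟩
  rw [← Finset.prod_erase_mul S _ ha] at hr
  set P := ∏ x ∈ S.erase a, x with hP
  have hq_not : ¬ q ∣ P := by
    intro hd
    obtain ⟨b, hb, hqb⟩ := (hq.prime.dvd_finset_prod_iff _).1 hd
    exact hother b (Finset.mem_of_mem_erase hb) (Finset.ne_of_mem_erase hb) hqb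
  have h1 : q ∣ r * r := by
    rw [← hr]; exact Dvd.dvd.mul_left hqa P
  have h2 : q ∣ r := by
    rcases (Nat.Prime.dvd_mul hq).1 h1 with h | h <;> exact h
  have h3 : q * q ∣ P * a := by rw [hr]; exact mul_dvd_mul h2 h2
  have hcop : Nat.Coprime (q * q) P :=
    ((hq.coprime_iff_not_dvd).2 hq_not).mul ((hq.coprime_iff_not_dvd).2 hq_not)
  exact hq2 (hcop.dvd_of_dvd_mul_left h3)

private lemma isSquare_mod (m k : ℕ) (hm : 0 < m) (h : IsSquare k) :
    ∃ x < m, k % m = x * x % m := by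
  obtain ⟨r, rfl⟩ := h
  exact ⟨r % m, Nat.mod_lt _ hm, by rw [Nat.mul_mod]⟩

private lemma checkD2 : ∀ S ∈ (Finset.Icc 2 4).powerset, 2 ∈ S → 4 ∈ S →
    ∀ x < 16, (∏ a ∈ S, a) % 16 ≠ x * x % 16 := by decide

private lemma checkD3 : ∀ S ∈ (Finset.Icc 3 6).powerset, 3 ∈ S → 6 ∈ S →
    ∀ x < 16, (∏ a ∈ S, a) % 16 ≠ x * x % 16 := by decide

private lemma checkD6 : ∀ S ∈ (Finset.Icc 6 11).powerset, 6 ∈ S →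
    (∀ x < 17, (∏ a ∈ S, a) % 17 ≠ x * x % 17) ∨
    (∀ y < 23, (∏ a ∈ S, a) % 23 ≠ y * y % 23) := by decide

/-- upper bound for primes: `2p` is in the set, given a suitable `m`. -/
private lemma prime_upper {p m : ℕ} (hp : p.Prime) (h1 : p < 2 * m ^ 2) (h2 : 2 * m ^ 2 < 2 * p) :
    grahamG p ≤ 2 * p := by
  have hp2 : 2 ≤ p := hp.two_le
  refine graham_le (by omega) {p, 2 * m ^ 2, 2 * p} (by simp) (by simp) ?_ ?_
  · intro a ha
    simp only [Finset.mem_insert, Finset.mem_singleton] at ha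
    rcases ha with rfl | rfl | rfl <;> omega
  · rw [Finset.prod_insert (by simp; omega), Finset.prod_pair (by omega)]
    exact ⟨2 * m * p, by ring⟩

/-- lower bound for primes: nothing below `2p` is in the set. -/
private lemma prime_lower {p : ℕ} (hp : p.Prime) :
    ∀ s ∈ {s | p ≤ s ∧ ∃ S : Finset ℕ, p ∈ S ∧ s ∈ S ∧
      (∀ a ∈ S, p ≤ a ∧ a ≤ s) ∧ IsSquare (∏ a ∈ S, a)}, 2 * p ≤ s := by
  rintro s ⟨hps, S, hpS, hsS, hb, hsq⟩
  by_contra hlt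
  push_neg at hlt
  refine key_prime hp S p hpS dvd_rfl ?_ ?_ hsq
  · intro hd
    have := Nat.le_of_dvd (by omega) hd
    nlinarith [hp.two_le]
  · intro b hb' hne hdvd
    obtain ⟨k, rfl⟩ := hdvd
    have h1 := (hb _ hb').1
    have h2 := (hb _ hb').2
    have hp0 : 0 < p := hp.pos
    -- p*k with p ≤ p*k ≤ s < 2p and p*k ≠ p
    have hk : k ≤ 1 := by
      by_contra hk'
      push_neg at hk'
      have : 2 * p ≤ p * k := by nlinarith
      omega
    interval_cases k <;> omega

private lemma exists_m {p : ℕ} (hp : p.Prime) (h4 : 3 < p) :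
    ∃ m, p < 2 * m ^ 2 ∧ 2 * m ^ 2 < 2 * p := by
  by_cases h9 : p < 9
  · refine ⟨2, ?_, ?_⟩ <;> · interval_cases p <;> first | omega | (exfalso; revert hp; decide)
  · push_neg at h9
    obtain ⟨m, hm⟩ : ∃ m, Nat.sqrt p = m := ⟨_, rfl⟩
    have hm3 : 3 ≤ m := hm ▸ Nat.le_sqrt.2 (by omega)
    have hle : m * m ≤ p := hm ▸ Nat.sqrt_le p
    have hne : m * m ≠ p := by
      intro h
      rcases (Nat.Prime.eq_one_or_self_of_dvd hp m ⟨m, h.symm⟩) with h1 | h1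
      · omega
      · nlinarith
    have hlt2 : m * m < p := lt_of_le_of_ne hle hne
    have hlt : p < (m + 1) * (m + 1) := hm ▸ Nat.lt_succ_sqrt p
    have hmm : m ^ 2 = m * m := sq m
    exact ⟨m, by nlinarith, by nlinarith⟩

private lemma graham_mem (n : ℕ) (hn : 0 < n) :
    n ≤ grahamG n ∧ ∃ S : Finset ℕ, n ∈ S ∧ grahamG n ∈ S ∧
      (∀ a ∈ S, n ≤ a ∧ a ≤ grahamG n) ∧ IsSquare (∏ a ∈ S, a) :=
  Nat.sInf_mem (graham_nonempty n hn)

theorem stmt_4 (n : ℕ) (hn : 0 < n) :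
    grahamG n = 2 * n ↔ (n.Prime ∧ 3 < n) ∨ n = 6 := by
  constructor
  · intro h
    by_contra hc
    push_neg at hc
    obtain ⟨hc1, hc6⟩ := hc
    by_cases hsq : IsSquare n
    · have hle : grahamG n ≤ n := by
        refine graham_le le_rfl {n} (by simp) (by simp) (by simp) (by simpa using hsq)
      omega
    by_cases hp : n.Prime
    · have hn3 : n ≤ 3 := hc1 hp
      have hn2 : 2 ≤ n := hp.two_le
      have hmem := graham_mem n hn
      rw [h] at hmem
      obtain ⟨-, S, hnS, h2nS, hbnd, hsq2⟩ := hmem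
      interval_cases n
      · have hsub : S ⊆ Finset.Icc 2 4 := by
          intro x hx
          have := hbnd x hx
          exact Finset.mem_Icc.2 ⟨this.1, by omega⟩
        obtain ⟨x, hx, hmod⟩ := isSquare_mod 16 _ (by norm_num) hsq2
        exact checkD2 S (Finset.mem_powerset.2 hsub) hnS h2nS x hx hmod
      · have hsub : S ⊆ Finset.Icc 3 6 := by
          intro x hx
          have := hbnd x hx
          exact Finset.mem_Icc.2 ⟨this.1, by omega⟩
        obtain ⟨x, hx, hmod⟩ := isSquare_mod 16 _ (by norm_num) hsq2
        exact checkD3 S (Finset.mem_powerset.2 hsub) hnS h2nS x hx hmod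
    · -- composite, non-square, n ≥ 2
      have hn1 : n ≠ 1 := by rintro rfl; exact hsq ⟨1, rfl⟩
      obtain ⟨a, b, hap, hab, haa⟩ : ∃ a b, a.Prime ∧ n = a * b ∧ a * a ≤ n := by
        refine ⟨n.minFac, n / n.minFac, Nat.minFac_prime hn1,
          (Nat.mul_div_cancel' (Nat.minFac_dvd n)).symm, ?_⟩
        have := Nat.minFac_sq_le_self hn hp
        nlinarith [this, sq n.minFac]
      have ha2 : 2 ≤ a := hap.two_le
      have hb2 : a ≤ b := Nat.le_of_mul_le_mul_left (hab ▸ haa) (by omega)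
      have hanb : a ≠ b := by
        rintro rfl
        exact hsq ⟨a, hab⟩
      have hb : a < b := lt_of_le_of_ne hb2 hanb
      have hs2n : (a + 1) * (b + 1) < 2 * n := by
        rcases eq_or_lt_of_le ha2 with h2a | h3a
        · have hbne3 : b ≠ 3 := by
            intro h3
            exact hc6 (by rw [hab, ← h2a, h3])
          have hb4 : 4 ≤ b := by omega
          nlinarith
        · nlinarith
      have hle : grahamG n ≤ (a + 1) * (b + 1) := by
        refine graham_le (by nlinarith) {a * b, a * (b + 1), (a + 1) * b, (a + 1) * (b + 1)}
          (by rw [hab]; simp) (by simp) ?_ ?_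
        · intro x hx
          simp only [Finset.mem_insert, Finset.mem_singleton] at hx
          rw [hab]
          rcases hx with rfl | rfl | rfl | rfl <;> constructor <;> nlinarith
        · have e1 : a * b ∉ ({a * (b + 1), (a + 1) * b, (a + 1) * (b + 1)} : Finset ℕ) := by
            simp only [Finset.mem_insert, Finset.mem_singleton]
            push_neg
            refine ⟨?_, ?_, ?_⟩ <;> · intro hx; nlinarith
          have e2 : a * (b + 1) ∉ ({(a + 1) * b, (a + 1) * (b + 1)} : Finset ℕ) := by
            simp only [Finset.mem_insert, Finset.mem_singleton]
            push_neg
            refine ⟨?_, ?_⟩ <;> · intro hx; nlinarith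
          have e3 : (a + 1) * b ≠ (a + 1) * (b + 1) := by intro hx; nlinarith
          rw [Finset.prod_insert e1, Finset.prod_insert e2, Finset.prod_pair e3]
          exact ⟨a * (a + 1) * b * (b + 1), by ring⟩
      omega
  · rintro (⟨hp, h4⟩ | rfl)
    · obtain ⟨m, h1, h2⟩ := exists_m hp h4
      refine le_antisymm (prime_upper hp h1 h2) (le_csInf ?_ (prime_lower hp))
      exact graham_nonempty n hn
    · -- n = 6
      refine le_antisymm ?_ (le_csInf (graham_nonempty 6 hn) ?_)
      · refine graham_le (by norm_num) {6, 8, 12} (by simp) (by simp) (by decide) ?_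
        have : (∏ a ∈ ({6, 8, 12} : Finset ℕ), a) = 576 := by decide
        rw [this]; exact ⟨24, rfl⟩
      · rintro s ⟨h6s, S, h6S, hsS, hb, hsq⟩
        by_contra hlt
        push_neg at hlt
        have hsub : S ⊆ Finset.Icc 6 11 := by
          intro x hx
          have := hb x hx
          exact Finset.mem_Icc.2 ⟨this.1, by omega⟩
        obtain ⟨x, hx, hx17⟩ := isSquare_mod 17 _ (by norm_num) hsq
        obtain ⟨y, hy, hy23⟩ := isSquare_mod 23 _ (by norm_num) hsq
        rcases checkD6 S (Finset.mem_powerset.2 hsub) h6S with h | h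
        · exact h x hx hx17
        · exact h y hy hy23
end

section
/- Fix m ≥ 2 and a positive integer n. Then g_m(n) = n if and only if n = k^d for some positive integers k, d with gcd(d, m) > 1. Here g_m(n) = n means there exists j with 1 ≤ j ≤ m−1 such that n^j is a perfect m-th power. -/
/-- An `m`-product sequence (as a multiset): a nonempty multiset of positive
integers in which no value occurs `m` or more times and whose product is a
perfect `m`-th power. -/
def IsMProdSeq (m : ℕ) (M : Multiset ℕ) : Prop :=
  M ≠ 0 ∧ (∀ a ∈ M, 0 < a) ∧ (∀ a, M.count a < m) ∧ ∃ R : ℕ, M.prod = R ^ m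

/-- `gm m n`: the least `s` such that some `m`-product sequence has smallest
term `n` and largest term `s`. -/
noncomputable def gm (m n : ℕ) : ℕ :=
  sInf {s | ∃ M : Multiset ℕ, IsMProdSeq m M ∧ n ∈ M ∧ s ∈ M ∧ ∀ a ∈ M, n ≤ a ∧ a ≤ s}

/-! A sequence with equal smallest and largest term `n` is `n` repeated `j` times, so
`g_m(n) = n` says exactly that `n ^ j` is an `m`-th power for some `0 < j < m`. Dividing the
exponents of `n ^ j = R ^ m` by `g = gcd j m` leaves coprime exponents, which forces `n` to be a
`d`-th power for `d = m / g > 1`, and `gcd d m = d`. Conversely, if `n = k ^ d` and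
`g = gcd d m > 1`, then `n ^ (m / g) = (k ^ (d / g)) ^ m` with `m / g < m`. -/

open Multiset

theorem gm_eq_self_iff {m n : ℕ} (hn : 0 < n) :
    gm m n = n ↔ ∃ j, IsMProdSeq m (replicate j n) := by
  rw [gm]
  constructor
  · intro h
    obtain ⟨M, hM, -, -, hbounds⟩ := h ▸ Nat.sInf_mem (Nat.nonempty_of_pos_sInf (h ▸ hn))
    have hM_eq : M = replicate (card M) n :=
      eq_replicate_card.2 fun b hb => le_antisymm (hbounds b hb).2 (hbounds b hb).1
    exact ⟨card M, hM_eq ▸ hM⟩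
  · rintro ⟨j, hj⟩
    have hj0 : j ≠ 0 := by rintro rfl; exact hj.1 rfl
    have hn_mem : n ∈ replicate j n := mem_replicate.2 ⟨hj0, rfl⟩
    refine IsLeast.csInf_eq ⟨⟨replicate j n, hj, hn_mem, hn_mem, ?_⟩, ?_⟩
    · intro a ha
      simp [eq_of_mem_replicate ha]
    · rintro s ⟨M, -, -, hsM, hbounds⟩
      exact (hbounds s hsM).1

theorem isMProdSeq_replicate_iff {m j n : ℕ} (hn : 0 < n) :
    IsMProdSeq m (replicate j n) ↔ 0 < j ∧ j < m ∧ ∃ R, n ^ j = R ^ m := by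
  simp only [IsMProdSeq, prod_replicate, ne_eq, ← card_eq_zero, card_replicate, count_replicate]
  constructor
  · rintro ⟨hj, -, hcount, hR⟩
    exact ⟨Nat.pos_of_ne_zero hj, by simpa using hcount n, hR⟩
  · rintro ⟨hj, hjm, hR⟩
    refine ⟨hj.ne', fun a ha => (eq_of_mem_replicate ha).symm ▸ hn, fun a => ?_, hR⟩
    split_ifs <;> omega

theorem exists_pow_of_pow_eq_pow {m n j R : ℕ} (hn : 0 < n) (hj : 0 < j) (hjm : j < m)
    (h : n ^ j = R ^ m) : ∃ k d, 0 < k ∧ 0 < d ∧ 1 < d.gcd m ∧ n = k ^ d := by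
  obtain ⟨k, hk, -⟩ := Nat.exists_eq_pow_of_pow_eq_pow (Or.inl hj.ne') h
  have hg : j.gcd m < m := (Nat.le_of_dvd hj (Nat.gcd_dvd_left j m)).trans_lt hjm
  have hd : 1 < m / j.gcd m := by
    rw [Nat.lt_div_iff_mul_lt' (Nat.gcd_dvd_right j m)]
    simpa using hg
  refine ⟨k, m / j.gcd m, Nat.pos_of_ne_zero ?_, by omega, ?_, hk⟩
  · rintro rfl
    rw [zero_pow (by omega)] at hk
    omega
  · rwa [Nat.gcd_eq_left (Nat.div_dvd_of_dvd (Nat.gcd_dvd_right j m))]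

theorem pow_div_gcd_eq_pow (k d m : ℕ) :
    (k ^ d) ^ (m / d.gcd m) = (k ^ (d / d.gcd m)) ^ m := by
  rw [← pow_mul, ← pow_mul, ← Nat.mul_div_assoc _ (Nat.gcd_dvd_right d m),
    Nat.mul_div_right_comm (Nat.gcd_dvd_left d m)]

theorem stmt_5 (m n : ℕ) (hm : 2 ≤ m) (hn : 0 < n) :
    gm m n = n ↔ ∃ k d : ℕ, 0 < k ∧ 0 < d ∧ 1 < Nat.gcd d m ∧ n = k ^ d := by
  simp only [gm_eq_self_iff hn, isMProdSeq_replicate_iff hn]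
  constructor
  · rintro ⟨j, hj, hjm, R, h⟩
    exact exists_pow_of_pow_eq_pow hn hj hjm h
  · rintro ⟨k, d, -, -, hg, rfl⟩
    have hgm : d.gcd m ≤ m := Nat.le_of_dvd (by omega) (Nat.gcd_dvd_right d m)
    exact ⟨m / d.gcd m, Nat.div_pos hgm (by omega), Nat.div_lt_self (by omega) hg,
      _, pow_div_gcd_eq_pow k d m⟩
end

section
/- Let m ≥ 2, let p be a prime, and suppose a nondecreasing sequence of positive integers a_1 ≤ … ≤ a_t has product equal to a perfect m-th power, with no value appearing m or more times. If the smallest multiple of p appearing in the sequence is k·p^j with gcd(k, p) = 1, j ≥ 1, and gcd(j, m) = 1, then some other term of the sequence is divisible by p to an exponent not divisible by m; consequently a_t ≥ k·p^j + p. -/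
lemma fact_multiset_prod (p : ℕ) (M : Multiset ℕ) (h : ∀ a ∈ M, 0 < a) :
    (M.prod).factorization p = (M.map (fun a => a.factorization p)).sum := by
  induction M using Multiset.induction with
  | empty => simp
  | cons a s ih =>
    have ha : a ≠ 0 := (h a (Multiset.mem_cons_self a s)).ne'
    have hs : s.prod ≠ 0 := by
      have : 0 < s.prod := Multiset.prod_pos (fun b hb => h b (Multiset.mem_cons_of_mem hb))
      exact this.ne'
    simp only [Multiset.prod_cons, Multiset.map_cons, Multiset.sum_cons]
    rw [Nat.factorization_mul ha hs, Finsupp.add_apply,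
      ih (fun b hb => h b (Multiset.mem_cons_of_mem hb))]

theorem stmt_7 (m : ℕ) (hm : 2 ≤ m) (p : ℕ) (hp : p.Prime)
    (M : Multiset ℕ) (hM : IsMProdSeq m M)
    (k j : ℕ) (hk : Nat.gcd k p = 1) (hj : 1 ≤ j) (hjm : Nat.gcd j m = 1)
    (hmem : k * p ^ j ∈ M)
    (hsmall : ∀ a ∈ M, p ∣ a → k * p ^ j ≤ a) :
    (∃ a ∈ M, a ≠ k * p ^ j ∧ ¬ m ∣ a.factorization p) ∧
    (∀ s ∈ M, (∀ a ∈ M, a ≤ s) → k * p ^ j + p ≤ s) := by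
  obtain ⟨hne, hpos, hcount, R, hR⟩ := hM
  set n := k * p ^ j with hn
  have hpk : ¬ p ∣ k := by
    intro hdvd
    have h1 : p ∣ Nat.gcd k p := Nat.dvd_gcd hdvd dvd_rfl
    rw [hk] at h1
    have h2 := Nat.eq_one_of_dvd_one h1
    have h3 := hp.one_lt
    omega
  have hk0 : k ≠ 0 := by
    intro h
    rw [h, Nat.gcd_zero_left] at hk
    have := hp.one_lt
    omega
  have hvn : n.factorization p = j := by
    rw [hn, Nat.factorization_mul hk0 (pow_ne_zero j hp.pos.ne'), Finsupp.add_apply,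
      Nat.factorization_eq_zero_of_not_dvd hpk, hp.factorization_pow, Finsupp.single_eq_same]
    simp
  -- total sum of valuations is divisible by m
  have htot : m ∣ (M.map (fun a => a.factorization p)).sum := by
    rw [← fact_multiset_prod p M hpos, hR]
    have hR0 : R ≠ 0 := by
      intro h
      rw [h, zero_pow (by omega)] at hR
      have := hpos n hmem
      have : M.prod ≠ 0 := (Multiset.prod_pos hpos).ne'
      exact this hR
    rw [Nat.factorization_pow, Finsupp.smul_apply, smul_eq_mul]
    exact Dvd.intro _ rfl
  have hex : ∃ a ∈ M, a ≠ n ∧ ¬ m ∣ a.factorization p := by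
    by_contra hcon
    push_neg at hcon
    have hall : ∀ a ∈ M, a ≠ n → m ∣ a.factorization p := hcon
    -- decompose M
    have hsplit : M.filter (· = n) + M.filter (fun a => ¬ a = n) = M :=
      Multiset.filter_add_not _ M
    set c := M.count n with hc
    have hfilt : M.filter (· = n) = Multiset.replicate c n := Multiset.filter_eq' M n
    have hsum : (M.map (fun a => a.factorization p)).sum
        = c * j + ((M.filter (fun a => ¬ a = n)).map (fun a => a.factorization p)).sum := by
      conv_lhs => rw [← hsplit]
      rw [Multiset.map_add, Multiset.sum_add, hfilt, Multiset.map_replicate,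
        Multiset.sum_replicate, hvn, smul_eq_mul]
    have hdvd2 : m ∣ ((M.filter (fun a => ¬ a = n)).map (fun a => a.factorization p)).sum := by
      apply Multiset.dvd_sum
      intro x hx
      obtain ⟨a, ha, rfl⟩ := Multiset.mem_map.mp hx
      obtain ⟨haM, hane⟩ := Multiset.mem_filter.mp ha
      exact hall a haM hane
    have hmcj : m ∣ c * j := by
      have := htot
      rw [hsum] at this
      exact (Nat.dvd_add_right hdvd2).mp (by rwa [Nat.add_comm] at this)
    have hcop : Nat.Coprime m j := Nat.Coprime.symm hjm
    have hmc : m ∣ c := hcop.dvd_of_dvd_mul_right hmcj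
    have hc1 : 1 ≤ c := Multiset.one_le_count_iff_mem.mpr hmem
    have : m ≤ c := Nat.le_of_dvd (by omega) hmc
    exact absurd (hcount n) (by omega)
  refine ⟨hex, ?_⟩
  intro s hs hmax
  obtain ⟨a, haM, hane, hav⟩ := hex
  have hap : p ∣ a := by
    have hv : a.factorization p ≠ 0 := fun h => hav (h ▸ dvd_zero m)
    exact Nat.dvd_of_factorization_pos hv
  have hna : n ≤ a := hsmall a haM hap
  have hlt : n < a := lt_of_le_of_ne hna (Ne.symm hane)
  have hpn : p ∣ n := Dvd.dvd.mul_left (dvd_pow_self p (by omega)) k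
  have hpd : p ∣ a - n := Nat.dvd_sub hap hpn
  have : p ≤ a - n := Nat.le_of_dvd (by omega) hpd
  have : n + p ≤ a := by omega
  exact le_trans this (hmax a haM)
end

section
/- Let m ≥ 2 and let n be a positive integer such that p^j exactly divides n for some prime p and some j ≥ 1 with gcd(j, m) = 1. Then g_m(n) ≥ n + p. In particular, for every prime p and every m ≥ 2, g_m(p) ≥ 2p. -/
lemma factorization_prod_count (p n j : ℕ)
    (hfn : n.factorization p = j)
    (M : Multiset ℕ) (hpos : ∀ a ∈ M, 0 < a)
    (hmem : ∀ a ∈ M, p ∣ a → a = n) :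
    (M.prod).factorization p = j * M.count n := by
  induction M using Multiset.induction with
  | empty => simp
  | cons a M ih =>
    have ha : 0 < a := hpos a (Multiset.mem_cons_self a M)
    have hprod : 0 < M.prod :=
      Multiset.prod_pos (fun b hb => hpos b (Multiset.mem_cons_of_mem hb))
    rw [Multiset.prod_cons, Nat.factorization_mul ha.ne' hprod.ne']
    simp only [Finsupp.add_apply]
    rw [ih (fun b hb => hpos b (Multiset.mem_cons_of_mem hb))
        (fun b hb => hmem b (Multiset.mem_cons_of_mem hb)),
      Multiset.count_cons]
    by_cases hna : n = a
    · subst hna; simp [hfn, Nat.mul_add]; omega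
    · have hnd : ¬ p ∣ a := fun hpa =>
        hna ((hmem a (Multiset.mem_cons_self a M) hpa).symm)
      rw [Nat.factorization_eq_zero_of_not_dvd hnd]
      simp [hna]

lemma gm_lower (m n p j : ℕ) (hm : 2 ≤ m) (hn : 0 < n) (hp : p.Prime)
    (hj : 1 ≤ j) (hjm : Nat.gcd j m = 1)
    (hdvd : p ^ j ∣ n) (hndvd : ¬ p ^ (j + 1) ∣ n) :
    n + p ≤ gm m n := by
  have hpn : p ∣ n := (dvd_pow_self p (Nat.one_le_iff_ne_zero.mp hj)).trans hdvd
  have hfn : n.factorization p = j := by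
    have h1 : j ≤ n.factorization p :=
      (Nat.Prime.pow_dvd_iff_le_factorization hp hn.ne').mp hdvd
    have h2 : ¬ (j + 1 ≤ n.factorization p) := fun h =>
      hndvd ((Nat.Prime.pow_dvd_iff_le_factorization hp hn.ne').mpr h)
    omega
  have hn2 : 2 ≤ n := le_trans hp.two_le (Nat.le_of_dvd hn hpn)
  -- nonemptiness of the defining set
  set S := {s | ∃ M : Multiset ℕ, IsMProdSeq m M ∧ n ∈ M ∧ s ∈ M ∧ ∀ a ∈ M, n ≤ a ∧ a ≤ s}
    with hS
  have hne : S.Nonempty := by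
    refine ⟨n ^ (m + 1), Multiset.replicate (m - 1) n + {n ^ (m + 1)}, ?_, ?_, ?_, ?_⟩
    · refine ⟨by simp, ?_, ?_, ⟨n ^ 2, ?_⟩⟩
      · intro a haM
        rcases Multiset.mem_add.mp haM with h | h
        · rw [Multiset.eq_of_mem_replicate h]; exact hn
        · rw [Multiset.mem_singleton.mp h]; positivity
      · intro a
        have hlt : n < n ^ (m + 1) := by
          calc n < n ^ 2 := by nlinarith
            _ ≤ n ^ (m + 1) := Nat.pow_le_pow_right hn (by omega)
        rw [Multiset.count_add, Multiset.count_replicate, Multiset.count_singleton]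
        by_cases h1 : a = n
        · subst h1; rw [if_pos rfl, if_neg (by omega)]; omega
        · rw [if_neg (fun h => h1 h.symm)]
          split <;> omega
      · rw [Multiset.prod_add, Multiset.prod_replicate, Multiset.prod_singleton,
          ← pow_add, ← pow_mul]
        congr 1
        omega
    · exact Multiset.mem_add.mpr (Or.inl (Multiset.mem_replicate.mpr ⟨by omega, rfl⟩))
    · exact Multiset.mem_add.mpr (Or.inr (Multiset.mem_singleton.mpr rfl))
    · intro a haM
      have hle : n ≤ n ^ (m + 1) := Nat.le_self_pow (by omega) n
      rcases Multiset.mem_add.mp haM with h | h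
      · rw [Multiset.eq_of_mem_replicate h]; exact ⟨le_refl n, hle⟩
      · rw [Multiset.mem_singleton.mp h]; exact ⟨hle, le_refl _⟩
  have hmem : gm m n ∈ S := Nat.sInf_mem hne
  obtain ⟨M, ⟨-, hpos, hcount, R, hprodR⟩, hnM, hsM, hbnd⟩ := hmem
  by_contra hcon
  push_neg at hcon
  -- every element of M divisible by p equals n
  have hkey : ∀ a ∈ M, p ∣ a → a = n := by
    intro a haM hpa
    have h1 : n ≤ a := (hbnd a haM).1
    have h2 : a ≤ gm m n := (hbnd a haM).2
    have h3 : p ∣ a - n := Nat.dvd_sub hpa hpn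
    have h4 : a - n < p := by omega
    have : a - n = 0 := by
      rcases Nat.eq_zero_or_pos (a - n) with h | h
      · exact h
      · exact absurd (Nat.le_of_dvd h h3) (by omega)
    omega
  have hval : (M.prod).factorization p = j * M.count n :=
    factorization_prod_count p n j hfn M hpos hkey
  have hMpos : 0 < M.prod := Multiset.prod_pos hpos
  have hR : R ≠ 0 := by
    rintro rfl
    rw [hprodR, zero_pow (by omega : m ≠ 0)] at hMpos
    exact lt_irrefl 0 hMpos
  have hval2 : (M.prod).factorization p = m * R.factorization p := by
    rw [hprodR, Nat.factorization_pow]; simp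
  have hdvdc : m ∣ j * M.count n := ⟨R.factorization p, by omega⟩
  have hco : Nat.Coprime m j := Nat.coprime_comm.mp hjm
  have hmc : m ∣ M.count n := hco.dvd_of_dvd_mul_left hdvdc
  have hc1 : 1 ≤ M.count n := Multiset.one_le_count_iff_mem.mpr hnM
  have := Nat.le_of_dvd (by omega) hmc
  have := hcount n
  omega

theorem stmt_8 (m n p j : ℕ) (hm : 2 ≤ m) (hn : 0 < n) (hp : p.Prime)
    (hj : 1 ≤ j) (hjm : Nat.gcd j m = 1)
    (hdvd : p ^ j ∣ n) (hndvd : ¬ p ^ (j + 1) ∣ n) :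
    n + p ≤ gm m n ∧ ∀ q : ℕ, q.Prime → 2 * q ≤ gm m q := by
  constructor
  · exact gm_lower m n p j hm hn hp hj hjm hdvd hndvd
  · intro q hq
    have h2q : ¬ q ^ (1 + 1) ∣ q := by
      intro h
      have h2 := Nat.le_of_dvd hq.pos h
      rw [pow_succ, pow_one] at h2
      nlinarith [hq.two_le]
    have := gm_lower m q q 1 hm hq.pos hq le_rfl (Nat.gcd_one_left m)
      (by simp) h2q
    omega
end

section
/- For every m ≥ 2 and every k ≥ 1, there exists a constant C(m,k) = (1 − (k/(k+1))^{1/m})^{−m} such that for all integers r > C(m,k), g_m(kr) ≤ (k+1)r. Specifically, for such r there exist integers l_1, l_2 with kr < k·l_1^m < (k+1)r and kr < (k+1)·l_2^m < (k+1)r, giving the m-product sequence kr, (k·l_1^m)^{m−1}, (k+1)·l_2^m, ((k+1)r)^{m−1}. -/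
/-- If `1 ≤ k`, `1 ≤ l₂` and `2 ≤ m`, then `k * l₁ ^ m ≠ (k+1) * l₂ ^ m`. -/
lemma aux_ne_pow (m k l₁ l₂ : ℕ) (hm : 2 ≤ m) (hk : 1 ≤ k) (hl₂ : 1 ≤ l₂) :
    k * l₁ ^ m ≠ (k + 1) * l₂ ^ m := by
  intro h
  obtain ⟨n, rfl⟩ : ∃ n, m = n + 2 := ⟨m - 2, by omega⟩
  have hb₂ : 0 < l₂ := hl₂
  have h1 : 0 < k * l₁ ^ (n + 2) := h ▸ by positivity
  have hl₁ : 0 < l₁ := by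
    rcases Nat.eq_zero_or_pos l₁ with rfl | h0
    · rw [Nat.zero_pow (by omega : 0 < n + 2)] at h1; omega
    · exact h0
  set g := Nat.gcd l₁ l₂ with hg
  have hg0 : 0 < g := Nat.gcd_pos_of_pos_left l₂ hl₁
  set a := l₁ / g with ha'
  set b := l₂ / g with hb'
  have hab : Nat.Coprime a b := Nat.coprime_div_gcd_div_gcd hg0
  have e1 : a * g = l₁ := Nat.div_mul_cancel (Nat.gcd_dvd_left l₁ l₂)
  have e2 : b * g = l₂ := Nat.div_mul_cancel (Nat.gcd_dvd_right l₁ l₂)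
  have ha : 0 < a := by
    rcases Nat.eq_zero_or_pos a with h' | h'
    · rw [h'] at e1; simp at e1; omega
    · exact h'
  have hb : 0 < b := by
    rcases Nat.eq_zero_or_pos b with h' | h'
    · rw [h'] at e2; simp at e2; omega
    · exact h'
  have key : k * a ^ (n + 2) = (k + 1) * b ^ (n + 2) := by
    apply Nat.eq_of_mul_eq_mul_right (pow_pos hg0 (n + 2))
    calc k * a ^ (n + 2) * g ^ (n + 2) = k * (a * g) ^ (n + 2) := by ring
      _ = (k + 1) * (b * g) ^ (n + 2) := by rw [e1, e2, h]
      _ = (k + 1) * b ^ (n + 2) * g ^ (n + 2) := by ring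
  have hdvd : a ^ (n + 2) ∣ (k + 1) * b ^ (n + 2) := ⟨k, by rw [← key]; ring⟩
  have hcop : Nat.Coprime (a ^ (n + 2)) (b ^ (n + 2)) := Nat.Coprime.pow _ _ hab
  obtain ⟨u, hu⟩ : a ^ (n + 2) ∣ k + 1 := hcop.dvd_of_dvd_mul_right hdvd
  have hk2 : k = u * b ^ (n + 2) := by
    apply Nat.eq_of_mul_eq_mul_right (pow_pos ha (n + 2))
    calc k * a ^ (n + 2) = (k + 1) * b ^ (n + 2) := key
      _ = a ^ (n + 2) * u * b ^ (n + 2) := by rw [← hu]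
      _ = u * b ^ (n + 2) * a ^ (n + 2) := by ring
  have heq : u * a ^ (n + 2) = u * b ^ (n + 2) + 1 := by
    have h1' : a ^ (n + 2) * u = k + 1 := hu.symm
    have h2' : u * b ^ (n + 2) = k := hk2.symm
    have h3' : u * a ^ (n + 2) = a ^ (n + 2) * u := mul_comm _ _
    linarith
  have hu0 : 0 < u := by
    rcases Nat.eq_zero_or_pos u with rfl | h'
    · simp at heq
    · exact h'
  have hYX : b ^ (n + 2) < a ^ (n + 2) := by
    by_contra hcon
    push_neg at hcon
    have h5 : u * a ^ (n + 2) ≤ u * b ^ (n + 2) := Nat.mul_le_mul_left u hcon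
    linarith
  have hu1 : u = 1 := by
    have h5 : u * (b ^ (n + 2) + 1) ≤ u * a ^ (n + 2) := Nat.mul_le_mul_left u hYX
    have h6 : u * (b ^ (n + 2) + 1) = u * b ^ (n + 2) + u := by ring
    have h7 : u ≤ 1 := by linarith
    omega
  have hX : a ^ (n + 2) = b ^ (n + 2) + 1 := by
    rw [hu1] at heq; simpa using heq
  have hba : b + 1 ≤ a := (Nat.pow_lt_pow_iff_left (by omega : n + 2 ≠ 0)).mp hYX
  have hbn : 1 ≤ b ^ n := Nat.one_le_pow _ _ hb
  have hmono : b ^ n ≤ (b + 1) ^ n := Nat.pow_le_pow_left (by omega) n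
  have t1 : 1 ≤ b ^ n * b := Nat.mul_le_mul hbn hb
  have hstep : b ^ (n + 2) + 2 ≤ (b + 1) ^ (n + 2) := by
    calc b ^ (n + 2) + 2 = b ^ n * b ^ 2 + 2 := by ring
      _ ≤ b ^ n * b ^ 2 + 2 * (b ^ n * b) + b ^ n := by linarith
      _ = b ^ n * (b + 1) ^ 2 := by ring
      _ ≤ (b + 1) ^ n * (b + 1) ^ 2 := Nat.mul_le_mul_right _ hmono
      _ = (b + 1) ^ (n + 2) := by ring
  have hfin : (b + 1) ^ (n + 2) ≤ a ^ (n + 2) := Nat.pow_le_pow_left hba _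
  omega

/-- If the `m`-th roots of `A < B` differ by more than `1`, there is a natural
`m`-th power strictly between `A` and `B`. -/
lemma exists_nat_pow_between (m : ℕ) (hm : m ≠ 0) {A B : ℝ} (hA : 0 ≤ A) (hB : 0 ≤ B)
    (h : A ^ ((1 : ℝ) / m) + 1 < B ^ ((1 : ℝ) / m)) :
    ∃ l : ℕ, A < (l : ℝ) ^ m ∧ (l : ℝ) ^ m < B := by
  set a := A ^ ((1 : ℝ) / m) with ha'
  set b := B ^ ((1 : ℝ) / m) with hb'
  have ha0 : 0 ≤ a := Real.rpow_nonneg hA _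
  have hb0 : 0 ≤ b := Real.rpow_nonneg hB _
  have hroot : ∀ X : ℝ, 0 ≤ X → (X ^ ((1 : ℝ) / m)) ^ m = X := by
    intro X hX
    rw [← Real.rpow_natCast (X ^ ((1 : ℝ) / m)) m, ← Real.rpow_mul hX, one_div,
      inv_mul_cancel₀ (by exact_mod_cast hm : (m : ℝ) ≠ 0), Real.rpow_one]
  refine ⟨⌊a⌋₊ + 1, ?_, ?_⟩
  · have h1 : a < ((⌊a⌋₊ + 1 : ℕ) : ℝ) := by push_cast; exact Nat.lt_floor_add_one a
    have := pow_lt_pow_left₀ h1 ha0 hm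
    rwa [hroot A hA] at this
  · have h2 : ((⌊a⌋₊ + 1 : ℕ) : ℝ) < b := by
      push_cast
      have := Nat.floor_le ha0
      linarith
    have h3 : (0 : ℝ) ≤ ((⌊a⌋₊ + 1 : ℕ) : ℝ) := by positivity
    have := pow_lt_pow_left₀ h2 h3 hm
    rwa [hroot B hB] at this

theorem stmt_9 (m k : ℕ) (hm : 2 ≤ m) (hk : 1 ≤ k) :
    ∀ r : ℕ,
      (r : ℝ) > (1 - ((k : ℝ) / ((k : ℝ) + 1)) ^ ((1 : ℝ) / (m : ℝ)))⁻¹ ^ m →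
      gm m (k * r) ≤ (k + 1) * r ∧
      ∃ l₁ l₂ : ℕ,
        k * r < k * l₁ ^ m ∧ k * l₁ ^ m < (k + 1) * r ∧
        k * r < (k + 1) * l₂ ^ m ∧ (k + 1) * l₂ ^ m < (k + 1) * r := by
  intro r hr
  have hm0 : m ≠ 0 := by omega
  have hkR : (0 : ℝ) < (k : ℝ) := by exact_mod_cast hk
  have hk1R : (0 : ℝ) < (k : ℝ) + 1 := by linarith
  set x : ℝ := (k : ℝ) / ((k : ℝ) + 1) with hxdef
  have hx0 : 0 < x := by positivity
  have hx1 : x < 1 := by rw [hxdef, div_lt_one hk1R]; linarith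
  set t : ℝ := x ^ ((1 : ℝ) / (m : ℝ)) with htdef
  have ht0 : 0 < t := Real.rpow_pos_of_pos hx0 _
  have hmR : (0 : ℝ) < (m : ℝ) := by exact_mod_cast (by omega : 0 < m)
  have ht1 : t < 1 := Real.rpow_lt_one hx0.le hx1 (by positivity)
  have hc : 0 < 1 - t := by linarith
  have hr0 : (0 : ℝ) < (r : ℝ) := lt_trans (by positivity) hr
  have hrn : 1 ≤ r := by
    by_contra h0
    push_neg at h0
    interval_cases r
    · simp at hr0
  set u : ℝ := (r : ℝ) ^ ((1 : ℝ) / (m : ℝ)) with hudef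
  have hu0 : 0 < u := Real.rpow_pos_of_pos hr0 _
  have hu : (1 - t)⁻¹ < u := by
    have h1 := Real.rpow_lt_rpow (by positivity) hr (by positivity : (0 : ℝ) < 1 / m)
    rwa [← Real.rpow_natCast ((1 - t)⁻¹) m, ← Real.rpow_mul (by positivity),
      mul_one_div, div_self (by exact_mod_cast hm0 : (m : ℝ) ≠ 0), Real.rpow_one] at h1
  have hgap : 1 < u * (1 - t) := by
    have h2 := mul_lt_mul_of_pos_right hu hc
    rwa [inv_mul_cancel₀ hc.ne'] at h2
  -- l₂ : x * r < l₂ ^ m < r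
  obtain ⟨l₂, hl₂a, hl₂b⟩ : ∃ l : ℕ, x * r < (l : ℝ) ^ m ∧ (l : ℝ) ^ m < r := by
    apply exists_nat_pow_between m hm0 (by positivity) hr0.le
    have e : (x * (r : ℝ)) ^ ((1 : ℝ) / (m : ℝ)) = t * u := by
      rw [htdef, hudef]; exact Real.mul_rpow hx0.le hr0.le
    rw [e, ← hudef]
    nlinarith
  -- l₁ : r < l₁ ^ m < r / x
  obtain ⟨l₁, hl₁a, hl₁b⟩ : ∃ l : ℕ, (r : ℝ) < (l : ℝ) ^ m ∧ (l : ℝ) ^ m < r / x := by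
    apply exists_nat_pow_between m hm0 hr0.le (by positivity)
    have e : ((r : ℝ) / x) ^ ((1 : ℝ) / (m : ℝ)) = u / t := by
      rw [htdef, hudef]; exact Real.div_rpow hr0.le hx0.le _
    rw [e, ← hudef, lt_div_iff₀ ht0]
    nlinarith
  -- the four nat inequalities
  have hq2a : k * r < (k + 1) * l₂ ^ m := by
    have h3 : (k : ℝ) * r < ((k : ℝ) + 1) * (l₂ : ℝ) ^ m := by
      have h4 := mul_lt_mul_of_pos_left hl₂a hk1R
      have e : ((k : ℝ) + 1) * (x * r) = k * r := by
        rw [hxdef]; field_simp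
      rw [e] at h4; exact h4
    exact_mod_cast h3
  have hq2b : (k + 1) * l₂ ^ m < (k + 1) * r := by
    have h3 : (l₂ : ℕ) ^ m < r := by exact_mod_cast hl₂b
    exact (mul_lt_mul_iff_right₀ (show 0 < k + 1 by omega)).mpr h3
  have hq1a : k * r < k * l₁ ^ m := by
    have h3 : (r : ℕ) < l₁ ^ m := by exact_mod_cast hl₁a
    exact (mul_lt_mul_iff_right₀ (show 0 < k by omega)).mpr h3
  have hq1b : k * l₁ ^ m < (k + 1) * r := by
    have h3 : (k : ℝ) * (l₁ : ℝ) ^ m < ((k : ℝ) + 1) * r := by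
      have h4 := mul_lt_mul_of_pos_left hl₁b hx0
      have e : x * ((r : ℝ) / x) = r := mul_div_cancel₀ _ hx0.ne'
      rw [e] at h4
      have h5 := mul_lt_mul_of_pos_left h4 hk1R
      have e2 : ((k : ℝ) + 1) * (x * (l₁ : ℝ) ^ m) = k * (l₁ : ℝ) ^ m := by
        rw [hxdef]; field_simp
      rw [e2] at h5
      linarith
    exact_mod_cast h3
  have hl₂1 : 1 ≤ l₂ := by
    rcases Nat.eq_zero_or_pos l₂ with rfl | h'
    · rw [Nat.zero_pow (by omega : 0 < m)] at hq2a; omega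
    · exact h'
  refine ⟨?_, l₁, l₂, hq1a, hq1b, hq2a, hq2b⟩
  -- the multiset
  set v₁ := k * r with hv₁
  set v₂ := k * l₁ ^ m with hv₂
  set v₃ := (k + 1) * l₂ ^ m with hv₃
  set v₄ := (k + 1) * r with hv₄
  have h23 : v₂ ≠ v₃ := aux_ne_pow m k l₁ l₂ hm hk hl₂1
  have h0 : 0 < v₁ := by rw [hv₁]; exact Nat.mul_pos (by omega) (by omega)
  set M : Multiset ℕ :=
    v₁ ::ₘ v₃ ::ₘ (Multiset.replicate (m - 1) v₂ + Multiset.replicate (m - 1) v₄) with hM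
  have hmem : ∀ a ∈ M, a = v₁ ∨ a = v₂ ∨ a = v₃ ∨ a = v₄ := by
    intro a haM
    rw [hM] at haM
    simp only [Multiset.mem_cons, Multiset.mem_add, Multiset.mem_replicate] at haM
    tauto
  have hv₁M : v₁ ∈ M := by rw [hM]; exact Multiset.mem_cons_self _ _
  have hv₄M : v₄ ∈ M := by
    rw [hM]
    refine Multiset.mem_cons_of_mem (Multiset.mem_cons_of_mem ?_)
    rw [Multiset.mem_add]
    right
    rw [Multiset.mem_replicate]
    exact ⟨by omega, rfl⟩
  have hprod : ∃ R : ℕ, M.prod = R ^ m := by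
    refine ⟨k * (k + 1) * r * l₁ ^ (m - 1) * l₂, ?_⟩
    rw [hM]
    simp only [Multiset.prod_cons, Multiset.prod_add, Multiset.prod_replicate]
    obtain ⟨n, rfl⟩ : ∃ n, m = n + 1 := ⟨m - 1, by omega⟩
    simp only [Nat.add_sub_cancel, hv₁, hv₂, hv₃, hv₄]
    generalize (k + 1) = K
    ring
  have hMprod : IsMProdSeq m M := by
    refine ⟨?_, ?_, ?_, hprod⟩
    · rw [hM]; exact Multiset.cons_ne_zero
    · intro a haM
      rcases hmem a haM with rfl | rfl | rfl | rfl
      · exact h0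
      · omega
      · omega
      · omega
    · intro a
      rw [hM]
      simp only [Multiset.count_cons, Multiset.count_add, Multiset.count_replicate]
      split_ifs <;> omega
  refine Nat.sInf_le ⟨M, hMprod, hv₁M, hv₄M, ?_⟩
  intro a haM
  rcases hmem a haM with rfl | rfl | rfl | rfl <;> omega
end

section
/- For real r > 0 and integers m ≥ 2, k ≥ 1: if r > (1 − (k/(k+1))^{1/m})^{−m} then both r^{1/m}·(((k+1)/k)^{1/m} − 1) > 1 and r^{1/m}·(1 − (k/(k+1))^{1/m}) > 1, so there exist integers l_1 with r < l_1^m < (k+1)r/k and l_2 with kr/(k+1) < l_2^m < r. -/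
theorem stmt_10 (r : ℝ) (hr : 0 < r) (m k : ℕ) (hm : 2 ≤ m) (hk : 1 ≤ k)
    (h : r > (1 - ((k : ℝ) / ((k : ℝ) + 1)) ^ ((1 : ℝ) / (m : ℝ)))⁻¹ ^ m) :
    r ^ ((1 : ℝ) / (m : ℝ)) * ((((k : ℝ) + 1) / (k : ℝ)) ^ ((1 : ℝ) / (m : ℝ)) - 1) > 1 ∧
    r ^ ((1 : ℝ) / (m : ℝ)) * (1 - ((k : ℝ) / ((k : ℝ) + 1)) ^ ((1 : ℝ) / (m : ℝ))) > 1 ∧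
    (∃ l₁ : ℕ, r < (l₁ : ℝ) ^ m ∧ (l₁ : ℝ) ^ m < ((k : ℝ) + 1) * r / (k : ℝ)) ∧
    (∃ l₂ : ℕ, (k : ℝ) * r / ((k : ℝ) + 1) < (l₂ : ℝ) ^ m ∧ (l₂ : ℝ) ^ m < r) := by
  have hmne : m ≠ 0 := by omega
  have hmpos : (0:ℝ) < (m:ℝ) := by exact_mod_cast Nat.pos_of_ne_zero hmne
  have hk0 : (0:ℝ) < (k:ℝ) := by exact_mod_cast hk
  set b : ℝ := (k:ℝ) / ((k:ℝ) + 1) with hbdef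
  have hb0 : 0 < b := by positivity
  have hb1 : b < 1 := by rw [hbdef, div_lt_one (by linarith)]; linarith
  set e : ℝ := 1 / (m:ℝ) with hedef
  have he : 0 < e := by positivity
  set c : ℝ := b ^ e with hcdef
  have hc0 : 0 < c := Real.rpow_pos_of_pos hb0 e
  have hc1 : c < 1 := Real.rpow_lt_one hb0.le hb1 he
  have h1c : 0 < 1 - c := by linarith
  set x : ℝ := r ^ e with hxdef
  have hx0 : 0 < x := Real.rpow_pos_of_pos hr e
  have hxm : x ^ m = r := by
    rw [hxdef, hedef, one_div, Real.rpow_inv_natCast_pow hr.le hmne]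
  have hxgt : (1 - c)⁻¹ < x := by
    have h2 : ((1 - c)⁻¹ ^ m) ^ e < x := Real.rpow_lt_rpow (by positivity) h he
    rwa [hedef, one_div, Real.pow_rpow_inv_natCast (by positivity) hmne] at h2
  have key2 : x * (1 - c) > 1 := by
    have h3 : (1 - c)⁻¹ * (1 - c) < x * (1 - c) := mul_lt_mul_of_pos_right hxgt h1c
    rwa [inv_mul_cancel₀ h1c.ne'] at h3
  have hcc : c * c⁻¹ = 1 := mul_inv_cancel₀ hc0.ne'
  have hgap : 1 - c < c⁻¹ - 1 := by nlinarith
  have key1 : x * (c⁻¹ - 1) > 1 := by nlinarith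
  have hinv : (((k:ℝ) + 1) / (k:ℝ)) ^ e = c⁻¹ := by
    rw [hcdef, ← Real.inv_rpow hb0.le]
    congr 1
    rw [hbdef, inv_div]
  have hx1 : 1 < x := by nlinarith [mul_pos hx0 hc0]
  refine ⟨by rw [hinv]; exact key1, key2, ?_, ?_⟩
  · -- l₁ = ⌊x⌋₊ + 1
    refine ⟨⌊x⌋₊ + 1, ?_, ?_⟩
    · have hlt : x < ((⌊x⌋₊ + 1 : ℕ) : ℝ) := by push_cast; exact Nat.lt_floor_add_one x
      calc r = x ^ m := hxm.symm
        _ < ((⌊x⌋₊ + 1 : ℕ) : ℝ) ^ m := pow_lt_pow_left₀ hlt hx0.le hmne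
    · have hy : (((k:ℝ) + 1) * r / (k:ℝ)) ^ e = x * c⁻¹ := by
        rw [show ((k:ℝ) + 1) * r / (k:ℝ) = r * (((k:ℝ) + 1) / (k:ℝ)) by ring,
          Real.mul_rpow hr.le (by positivity), hinv, hxdef]
      have hle : ((⌊x⌋₊ + 1 : ℕ) : ℝ) ≤ x + 1 := by
        push_cast
        have := Nat.floor_le hx0.le
        linarith
      have hlt2 : ((⌊x⌋₊ + 1 : ℕ) : ℝ) < (((k:ℝ) + 1) * r / (k:ℝ)) ^ e := by
        rw [hy]; nlinarith
      have hpos : (0:ℝ) < ((k:ℝ) + 1) * r / (k:ℝ) := by positivity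
      calc ((⌊x⌋₊ + 1 : ℕ) : ℝ) ^ m < ((((k:ℝ) + 1) * r / (k:ℝ)) ^ e) ^ m :=
            pow_lt_pow_left₀ hlt2 (by positivity) hmne
        _ = ((k:ℝ) + 1) * r / (k:ℝ) := by
            rw [hedef, one_div, Real.rpow_inv_natCast_pow hpos.le hmne]
  · -- l₂ = ⌈x⌉₊ - 1
    have hceil : 1 ≤ ⌈x⌉₊ := Nat.one_le_ceil_iff.mpr hx0
    refine ⟨⌈x⌉₊ - 1, ?_, ?_⟩
    · have hw : ((k:ℝ) * r / ((k:ℝ) + 1)) ^ e = x * c := by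
        rw [show (k:ℝ) * r / ((k:ℝ) + 1) = r * ((k:ℝ) / ((k:ℝ) + 1)) by ring, ← hbdef,
          Real.mul_rpow hr.le hb0.le, ← hcdef, ← hxdef]
      have hge : x - 1 ≤ ((⌈x⌉₊ - 1 : ℕ) : ℝ) := by
        rw [Nat.cast_sub hceil]
        have := Nat.le_ceil x
        push_cast
        linarith
      have hlt3 : ((k:ℝ) * r / ((k:ℝ) + 1)) ^ e < ((⌈x⌉₊ - 1 : ℕ) : ℝ) := by
        rw [hw]; nlinarith
      have hpos : (0:ℝ) < (k:ℝ) * r / ((k:ℝ) + 1) := by positivity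
      calc (k:ℝ) * r / ((k:ℝ) + 1)
          = (((k:ℝ) * r / ((k:ℝ) + 1)) ^ e) ^ m := by
            rw [hedef, one_div, Real.rpow_inv_natCast_pow hpos.le hmne]
        _ < ((⌈x⌉₊ - 1 : ℕ) : ℝ) ^ m := pow_lt_pow_left₀ hlt3 (by positivity) hmne
    · have hlt4 : ((⌈x⌉₊ - 1 : ℕ) : ℝ) < x := by
        rw [Nat.cast_sub hceil]
        have := Nat.ceil_lt_add_one hx0.le
        push_cast
        linarith
      calc ((⌈x⌉₊ - 1 : ℕ) : ℝ) ^ m < x ^ m := pow_lt_pow_left₀ hlt4 (by positivity) hmne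
        _ = r := hxm
end

section
/- Let p ≥ 5 be prime and k ≥ 0. Then g_p(2^k) ≤ 2^{k+1}. In particular: if k ≡ 0 (mod p) then 2^k is a p-th power; if k ≡ a (mod p) with 1 ≤ a ≤ p−2, then (2^k)^{a+1}·(2^{k+1})^{p−a} is a p-th power; and if k = sp − 1 with s ≥ 1, then (2^{sp−1})·(3²·2^{sp−4})·(3·2^{sp−2})^{p−5}·(3³·2^{sp−5}) is a p-th power with all factors in [2^{sp−1}, 2^{sp}). -/
lemma gm_le (m n s : ℕ) (M : Multiset ℕ) (h : IsMProdSeq m M) (hn : n ∈ M) (hs : s ∈ M)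
    (hb : ∀ a ∈ M, n ≤ a ∧ a ≤ s) : gm m n ≤ s :=
  Nat.sInf_le ⟨M, h, hn, hs, hb⟩

lemma lemB (p k a : ℕ) (hp5 : 5 ≤ p) (ha2 : a ≤ p - 2) (hka : k % p = a) :
    ∃ R : ℕ, (2 ^ k) ^ (a + 1) * (2 ^ (k + 1)) ^ (p - a) = R ^ p := by
  obtain ⟨b, hb⟩ := Nat.exists_eq_add_of_le (show a ≤ p by omega)
  have hk : k = a + p * (k / p) := by
    conv_lhs => rw [← Nat.mod_add_div k p, hka]
  set q := k / p with hq
  refine ⟨2 ^ (q + k + 1), ?_⟩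
  rw [← pow_mul, ← pow_mul, ← pow_add, ← pow_mul]
  congr 1
  have hpa : p - a = b := by omega
  rw [hpa]
  subst hb
  rw [hk]
  ring

lemma lemC (p s : ℕ) (hp5 : 5 ≤ p) (hs : 1 ≤ s) :
    ∃ R : ℕ, 2 ^ (s * p - 1) * (3 ^ 2 * 2 ^ (s * p - 4)) *
      (3 * 2 ^ (s * p - 2)) ^ (p - 5) * (3 ^ 3 * 2 ^ (s * p - 5)) = R ^ p := by
  obtain ⟨r, hr⟩ := Nat.exists_eq_add_of_le hp5
  have h5n : 5 ≤ s * p := le_trans hp5 (Nat.le_mul_of_pos_left p hs)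
  obtain ⟨t, ht⟩ := Nat.exists_eq_add_of_le h5n
  have hts : s * (5 + r) = 5 + t := by rw [← hr, ← ht]
  have h2s : 2 * s ≤ t + 3 := by nlinarith
  obtain ⟨m, hm'⟩ := Nat.exists_eq_add_of_le h2s
  have hm : t + 3 = 2 * s + m := hm'
  have e1 : s * p - 1 = t + 4 := by omega
  have e2 : s * p - 4 = t + 1 := by omega
  have e3 : s * p - 2 = t + 3 := by omega
  have e4 : s * p - 5 = t := by omega
  have e5 : p - 5 = r := by omega
  rw [e1, e2, e3, e4, e5]
  refine ⟨3 * 2 ^ m, ?_⟩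
  rw [mul_pow, mul_pow, ← pow_mul, ← pow_mul]
  have hexp : (t + 4) + ((t + 1) + ((t + 3) * r + t)) = m * p := by
    rw [hr]
    zify at hts hm ⊢
    linear_combination 2 * hts + (5 + r) * hm
  have h3 : (2 : ℕ) + r + 3 = p := by omega
  calc 2 ^ (t + 4) * (3 ^ 2 * 2 ^ (t + 1)) * (3 ^ r * 2 ^ ((t + 3) * r)) * (3 ^ 3 * 2 ^ t)
      = 3 ^ (2 + r + 3) * 2 ^ ((t + 4) + ((t + 1) + ((t + 3) * r + t))) := by
        rw [pow_add, pow_add, pow_add, pow_add]; ring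
    _ = 3 ^ p * 2 ^ (m * p) := by rw [h3, hexp]

lemma boundsD (t : ℕ) :
    (2^(t+4) ≤ 3^2*2^(t+1) ∧ 2^(t+4) ≤ 3*2^(t+3) ∧ 2^(t+4) ≤ 3^3*2^t) ∧
    (2^(t+4) < 2^(t+5) ∧ 3^2*2^(t+1) < 2^(t+5) ∧ 3*2^(t+3) < 2^(t+5) ∧ 3^3*2^t < 2^(t+5)) ∧
    (3^2*2^(t+1) ≤ 3^3*2^t ∧ 3*2^(t+3) ≤ 3^3*2^t) := by
  have h0 : 0 < 2^t := pow_pos (by norm_num) t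
  have e4 : 2^(t+4) = 16*2^t := by ring
  have e5 : 2^(t+5) = 32*2^t := by ring
  have e1 : (3:ℕ)^2*2^(t+1) = 18*2^t := by ring
  have e3 : (3:ℕ)*2^(t+3) = 24*2^t := by ring
  have e0 : (3:ℕ)^3*2^t = 27*2^t := by ring
  rw [e4, e5, e1, e3, e0]
  refine ⟨⟨?_, ?_, ?_⟩, ⟨?_, ?_, ?_, ?_⟩, ?_, ?_⟩ <;>
    first
      | exact Nat.mul_le_mul_right _ (by norm_num)
      | exact (Nat.mul_lt_mul_right h0).mpr (by norm_num)

theorem stmt_11 (p : ℕ) (hp : p.Prime) (hp5 : 5 ≤ p) (k : ℕ) :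
    gm p (2 ^ k) ≤ 2 ^ (k + 1) ∧
    (k % p = 0 → ∃ R : ℕ, 2 ^ k = R ^ p) ∧
    (∀ a : ℕ, 1 ≤ a → a ≤ p - 2 → k % p = a →
      ∃ R : ℕ, (2 ^ k) ^ (a + 1) * (2 ^ (k + 1)) ^ (p - a) = R ^ p) ∧
    (∀ s : ℕ, 1 ≤ s → k = s * p - 1 →
      (∃ R : ℕ, 2 ^ (s * p - 1) * (3 ^ 2 * 2 ^ (s * p - 4)) *
        (3 * 2 ^ (s * p - 2)) ^ (p - 5) * (3 ^ 3 * 2 ^ (s * p - 5)) = R ^ p) ∧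
      ∀ f ∈ ({2 ^ (s * p - 1), 3 ^ 2 * 2 ^ (s * p - 4),
              3 * 2 ^ (s * p - 2), 3 ^ 3 * 2 ^ (s * p - 5)} : Finset ℕ),
        2 ^ (s * p - 1) ≤ f ∧ f < 2 ^ (s * p)) := by
  have hppos : 0 < p := by omega
  have part2 : k % p = 0 → ∃ R : ℕ, 2 ^ k = R ^ p := by
    intro h
    exact ⟨2 ^ (k / p), by rw [← pow_mul, Nat.div_mul_cancel (Nat.dvd_of_mod_eq_zero h)]⟩
  have part4 : ∀ s : ℕ, 1 ≤ s → k = s * p - 1 →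
      (∃ R : ℕ, 2 ^ (s * p - 1) * (3 ^ 2 * 2 ^ (s * p - 4)) *
        (3 * 2 ^ (s * p - 2)) ^ (p - 5) * (3 ^ 3 * 2 ^ (s * p - 5)) = R ^ p) ∧
      ∀ f ∈ ({2 ^ (s * p - 1), 3 ^ 2 * 2 ^ (s * p - 4),
              3 * 2 ^ (s * p - 2), 3 ^ 3 * 2 ^ (s * p - 5)} : Finset ℕ),
        2 ^ (s * p - 1) ≤ f ∧ f < 2 ^ (s * p) := by
    intro s hs hk
    refine ⟨lemC p s hp5 hs, ?_⟩
    have h5n : 5 ≤ s * p := le_trans hp5 (Nat.le_mul_of_pos_left p hs)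
    obtain ⟨t, ht⟩ := Nat.exists_eq_add_of_le h5n
    have e1 : s * p - 1 = t + 4 := by omega
    have e2 : s * p - 4 = t + 1 := by omega
    have e3 : s * p - 2 = t + 3 := by omega
    have e4 : s * p - 5 = t := by omega
    have e6 : s * p = t + 5 := by omega
    rw [e1, e2, e3, e4, e6]
    obtain ⟨⟨b1, b2, b3⟩, ⟨c1, c2, c3, c4⟩, -⟩ := boundsD t
    intro f hf
    simp only [Finset.mem_insert, Finset.mem_singleton] at hf
    rcases hf with rfl | rfl | rfl | rfl
    · exact ⟨le_rfl, c1⟩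
    · exact ⟨b1, c2⟩
    · exact ⟨b2, c3⟩
    · exact ⟨b3, c4⟩
  refine ⟨?_, part2, fun a _ ha2 hka => lemB p k a hp5 ha2 hka, part4⟩
  -- main bound
  have hlt : k % p < p := Nat.mod_lt k hppos
  rcases Nat.lt_or_ge (k % p) (p - 1) with hcase | hcase
  · rcases Nat.eq_zero_or_pos (k % p) with h0 | h1
    · -- case k % p = 0
      obtain ⟨R, hR⟩ := part2 h0
      have hmem : IsMProdSeq p ({2 ^ k} : Multiset ℕ) := by
        refine ⟨by simp, by simp, ?_, ⟨R, by simpa using hR⟩⟩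
        intro a
        rw [Multiset.count_singleton]
        split <;> omega
      have h1 := gm_le p (2 ^ k) (2 ^ k) _ hmem (by simp) (by simp)
        (by intro a ha; simp at ha; simp [ha])
      exact le_trans h1 (Nat.pow_le_pow_right (by norm_num) (by omega))
    · -- case 1 ≤ k % p ≤ p - 2
      set a := k % p with ha
      have ha2 : a ≤ p - 2 := by omega
      obtain ⟨R, hR⟩ := lemB p k a hp5 ha2 rfl
      set M : Multiset ℕ :=
        Multiset.replicate (a + 1) (2 ^ k) + Multiset.replicate (p - a) (2 ^ (k + 1)) with hM
      have hne : (2 : ℕ) ^ k ≠ 2 ^ (k + 1) := by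
        have : (2 : ℕ) ^ k < 2 ^ (k + 1) := Nat.pow_lt_pow_right (by norm_num) (by omega)
        omega
      have hmemn : (2 : ℕ) ^ k ∈ M := by
        rw [hM]
        exact Multiset.mem_add.2 (Or.inl (Multiset.mem_replicate.2 ⟨by omega, rfl⟩))
      have hmems : (2 : ℕ) ^ (k + 1) ∈ M := by
        rw [hM]
        exact Multiset.mem_add.2 (Or.inr (Multiset.mem_replicate.2 ⟨by omega, rfl⟩))
      have hprod : IsMProdSeq p M := by
        refine ⟨fun h => by rw [h] at hmemn; simp at hmemn, ?_, ?_, ⟨R, ?_⟩⟩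
        · intro x hx
          rw [hM, Multiset.mem_add] at hx
          rcases hx with hx | hx <;>
            rw [Multiset.mem_replicate] at hx <;> rw [hx.2] <;> positivity
        · intro x
          rw [hM, Multiset.count_add, Multiset.count_replicate, Multiset.count_replicate]
          split_ifs with h1' h2'
          · exact absurd (h1'.trans h2'.symm) hne
          · omega
          · omega
          · omega
        · rw [hM, Multiset.prod_add, Multiset.prod_replicate, Multiset.prod_replicate]
          exact hR
      refine gm_le p (2 ^ k) (2 ^ (k + 1)) M hprod hmemn hmems ?_
      intro x hx
      rw [hM, Multiset.mem_add] at hx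
      have hle : (2 : ℕ) ^ k ≤ 2 ^ (k + 1) := Nat.pow_le_pow_right (by norm_num) (by omega)
      rcases hx with hx | hx <;> rw [Multiset.mem_replicate] at hx <;> rw [hx.2]
      · exact ⟨le_rfl, hle⟩
      · exact ⟨hle, le_rfl⟩
  · -- case k % p = p - 1
    have hkp : k % p = p - 1 := by omega
    have hdvd : p ∣ k + 1 := by
      have h1p : 1 % p = 1 := Nat.mod_eq_of_lt (by omega)
      have hpp : p - 1 + 1 = p := by omega
      have : (k + 1) % p = 0 := by rw [Nat.add_mod, hkp, h1p, hpp, Nat.mod_self]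
      exact Nat.dvd_of_mod_eq_zero this
    obtain ⟨s, hsk⟩ := hdvd
    have hs : 1 ≤ s := by
      rcases Nat.eq_zero_or_pos s with h | h
      · rw [h, mul_zero] at hsk; omega
      · exact h
    have hsk' : k + 1 = s * p := by rw [hsk]; ring
    have h5n : 5 ≤ s * p := le_trans hp5 (Nat.le_mul_of_pos_left p hs)
    obtain ⟨t, ht⟩ := Nat.exists_eq_add_of_le h5n
    have hkt : k = t + 4 := by omega
    obtain ⟨R, hR⟩ := lemC p s hp5 hs
    have e1 : s * p - 1 = t + 4 := by omega
    have e2 : s * p - 4 = t + 1 := by omega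
    have e3 : s * p - 2 = t + 3 := by omega
    have e4 : s * p - 5 = t := by omega
    rw [e1, e2, e3, e4] at hR
    set M : Multiset ℕ := 2 ^ (t + 4) ::ₘ (3 ^ 2 * 2 ^ (t + 1)) ::ₘ (3 ^ 3 * 2 ^ t) ::ₘ
      Multiset.replicate (p - 5) (3 * 2 ^ (t + 3)) with hM
    obtain ⟨⟨b1, b2, b3⟩, ⟨c1, c2, c3, c4⟩, d1, d2⟩ := boundsD t
    have hmemn : (2 : ℕ) ^ (t + 4) ∈ M := by rw [hM]; exact Multiset.mem_cons_self _ _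
    have hmems : (3 : ℕ) ^ 3 * 2 ^ t ∈ M := by
      rw [hM]
      exact Multiset.mem_cons_of_mem (Multiset.mem_cons_of_mem (Multiset.mem_cons_self _ _))
    have hmemx : ∀ x ∈ M, x = 2 ^ (t + 4) ∨ x = 3 ^ 2 * 2 ^ (t + 1) ∨
        x = 3 ^ 3 * 2 ^ t ∨ x = 3 * 2 ^ (t + 3) := by
      intro x hx
      rw [hM, Multiset.mem_cons, Multiset.mem_cons, Multiset.mem_cons] at hx
      rcases hx with h | h | h | h
      · exact Or.inl h
      · exact Or.inr (Or.inl h)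
      · exact Or.inr (Or.inr (Or.inl h))
      · exact Or.inr (Or.inr (Or.inr (Multiset.mem_replicate.1 h).2))
    have hprod : IsMProdSeq p M := by
      refine ⟨by rw [hM]; exact Multiset.cons_ne_zero, ?_, ?_, ⟨R, ?_⟩⟩
      · intro x hx
        rcases hmemx x hx with h | h | h | h <;> rw [h] <;> positivity
      · intro x
        rw [hM, Multiset.count_cons, Multiset.count_cons, Multiset.count_cons,
          Multiset.count_replicate]
        split_ifs <;> omega
      · rw [hM]
        simp only [Multiset.prod_cons, Multiset.prod_replicate]
        rw [← hR]; ring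
    have hgm : gm p (2 ^ (t + 4)) ≤ 3 ^ 3 * 2 ^ t := by
      refine gm_le p _ _ M hprod hmemn hmems ?_
      intro x hx
      rcases hmemx x hx with h | h | h | h <;> rw [h]
      · exact ⟨le_rfl, b3⟩
      · exact ⟨b1, d1⟩
      · exact ⟨b3, le_rfl⟩
      · exact ⟨b2, d2⟩
    rw [hkt]
    calc gm p (2 ^ (t + 4)) ≤ 3 ^ 3 * 2 ^ t := hgm
      _ ≤ 2 ^ (t + 4 + 1) := le_of_lt (by simpa using c4)
end

section
/- For every m ≥ 2 and every natural number n, g_m(n) is not a prime number. -/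
lemma prod_pos_ne_zero (M : Multiset ℕ) (hpos : ∀ a ∈ M, 0 < a) : M.prod ≠ 0 := by
  intro h
  rcases Multiset.prod_eq_zero_iff.mp h with hz
  exact absurd (hpos 0 hz) (lt_irrefl 0)

lemma fact_count (s : ℕ) (hs : s.Prime) (M : Multiset ℕ)
    (hpos : ∀ a ∈ M, 0 < a) (hle : ∀ a ∈ M, a ≤ s) :
    (M.prod).factorization s = M.count s := by
  induction M using Multiset.induction_on with
  | empty => simp
  | cons a M ih =>
    have hpos' : ∀ b ∈ M, 0 < b := fun b hb => hpos b (Multiset.mem_cons_of_mem hb)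
    have hle' : ∀ b ∈ M, b ≤ s := fun b hb => hle b (Multiset.mem_cons_of_mem hb)
    have ha : 0 < a := hpos a (Multiset.mem_cons_self a M)
    have hprodne : M.prod ≠ 0 := prod_pos_ne_zero M hpos'
    rw [Multiset.prod_cons, Nat.factorization_mul ha.ne' hprodne]
    simp only [Finsupp.coe_add, Pi.add_apply, ih hpos' hle', Multiset.count_cons]
    by_cases h : a = s
    · subst h
      simp [hs.factorization, Nat.add_comm]
    · have hnd : ¬ s ∣ a := by
        intro hd
        have := Nat.le_of_dvd ha hd
        exact h (le_antisymm (hle a (Multiset.mem_cons_self a M)) this)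
      simp [Nat.factorization_eq_zero_of_not_dvd hnd, if_neg (Ne.symm h)]

theorem stmt_13 (m : ℕ) (hm : 2 ≤ m) (n : ℕ) : ¬ (gm m n).Prime := by
  intro hp
  set S := {s | ∃ M : Multiset ℕ, IsMProdSeq m M ∧ n ∈ M ∧ s ∈ M ∧ ∀ a ∈ M, n ≤ a ∧ a ≤ s}
  by_cases hS : S.Nonempty
  · have hmem : gm m n ∈ S := Nat.sInf_mem hS
    obtain ⟨M, ⟨hne, hpos, hcnt, R, hR⟩, hn, hs, hbd⟩ := hmem
    set s := gm m n
    have hle : ∀ a ∈ M, a ≤ s := fun a ha => (hbd a ha).2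
    have hval : (M.prod).factorization s = M.count s := fact_count s hp M hpos hle
    have hRne : R ≠ 0 := by
      intro h
      subst h
      rw [zero_pow (by omega : m ≠ 0)] at hR
      exact prod_pos_ne_zero M hpos hR
    have hdvd : m ∣ M.count s := by
      rw [← hval, hR, Nat.factorization_pow]
      exact Dvd.intro _ rfl
    have h1 : 0 < M.count s := Multiset.count_pos.mpr hs
    have := Nat.le_of_dvd h1 hdvd
    exact absurd (hcnt s) (not_lt.mpr this)
  · have : gm m n = 0 := Nat.sInf_eq_zero.mpr (Or.inr (Set.not_nonempty_iff_eq_empty.mp hS))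
    rw [this] at hp
    exact hp.ne_zero rfl
end

section
/- If m is prime, then the function g_m is injective on the positive integers: for 0 < n < n', g_m(n) ≠ g_m(n'). -/
/-!
Let `s = g_m(n) = g_m(n')` with `n < n'`, realised by `m`-product sequences `M` (from `n`) and
`M'` (from `n'`), and let `c, c' ∈ (0, m)` be the multiplicities of `s` in them. As `m` is prime,
some `k` makes `c + k c' ≡ 0 (mod m)`. Reducing the multiplicities of `M + k • M'` modulo `m`
gives again an `m`-product sequence: its product differs from that of `M + k • M'` by an `m`-th
power. It still contains `n` (which does not occur in `M'`) but no longer contains `s`, so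
`g_m(n) < s`.
-/

theorem Nat.exists_eq_pow_of_mul_pow_eq_pow {m a b c : ℕ} (hm : m ≠ 0) (hb : b ≠ 0)
    (h : a * b ^ m = c ^ m) : ∃ d, a = d ^ m := by
  obtain ⟨d, rfl⟩ : b ∣ c := (Nat.pow_dvd_pow_iff hm).mp ⟨a, by rw [← h, mul_comm]⟩
  refine ⟨d, Nat.eq_of_mul_eq_mul_right (pow_pos (Nat.pos_of_ne_zero hb) m) ?_⟩
  rw [h, mul_pow, mul_comm]

theorem Nat.exists_dvd_add_mul_of_not_dvd {p : ℕ} (hp : p.Prime) {b : ℕ} (hb : ¬p ∣ b) (a : ℕ) :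
    ∃ k, p ∣ a + k * b := by
  have := Fact.mk hp
  have hb' : (b : ZMod p) ≠ 0 := by rwa [Ne, ZMod.natCast_eq_zero_iff]
  refine ⟨(-(a : ZMod p) / b).val, (ZMod.natCast_eq_zero_iff _ _).mp ?_⟩
  push_cast
  rw [ZMod.natCast_zmod_val, div_mul_cancel₀ _ hb', add_neg_cancel]

namespace Multiset

variable {α : Type*} [DecidableEq α]

theorem exists_eq_add_nsmul_count_mod (P : Multiset α) (m : ℕ) :
    ∃ N Q : Multiset α, P = N + m • Q ∧ ∀ a, N.count a = P.count a % m := by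
  refine ⟨Finsupp.toMultiset (P.toFinsupp.mapRange (· % m) (Nat.zero_mod m)),
    Finsupp.toMultiset (P.toFinsupp.mapRange (· / m) (Nat.zero_div m)), ?_, fun a => by simp⟩
  ext a
  simp [Nat.mod_add_div]

end Multiset

theorem exists_isMProdSeq_le_count_eq_mod {m R b : ℕ} (hm : m ≠ 0) {P : Multiset ℕ}
    (hpos : ∀ a ∈ P, 0 < a) (hR : P.prod = R ^ m) (hb : ¬m ∣ P.count b) :
    ∃ N, IsMProdSeq m N ∧ N ≤ P ∧ ∀ a, N.count a = P.count a % m := by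
  obtain ⟨N, Q, rfl, hN⟩ := P.exists_eq_add_nsmul_count_mod m
  have hprod : N.prod * Q.prod ^ m = R ^ m := by rw [← hR, Multiset.prod_add, Multiset.prod_nsmul]
  have hQ : Q.prod ≠ 0 := fun h0 => by
    have : (N + m • Q).prod ≠ 0 := Multiset.prod_ne_zero fun h => (hpos 0 h).ne rfl
    simp [Multiset.prod_add, Multiset.prod_nsmul, h0, hm] at this
  have hNP : N ≤ N + m • Q := Multiset.le_add_right N _
  refine ⟨N, ⟨fun h0 => hb ?_, fun a ha => hpos a (Multiset.mem_of_le hNP ha),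
    fun a => hN a ▸ Nat.mod_lt _ (Nat.pos_of_ne_zero hm),
    Nat.exists_eq_pow_of_mul_pow_eq_pow hm hQ hprod⟩, hNP, hN⟩
  rw [Nat.dvd_iff_mod_eq_zero, ← hN, h0, Multiset.count_zero]

/-- `gm m n` is by definition the least `s` such that `IsMProdSeqFromTo m n s M` for some `M`. -/
def IsMProdSeqFromTo (m n s : ℕ) (M : Multiset ℕ) : Prop :=
  IsMProdSeq m M ∧ n ∈ M ∧ s ∈ M ∧ ∀ a ∈ M, n ≤ a ∧ a ≤ s

theorem gm_lt {m n s : ℕ} {M : Multiset ℕ} (hM : IsMProdSeq m M) (hn : n ∈ M)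
    (hbound : ∀ a ∈ M, n ≤ a ∧ a < s) : gm m n < s := by
  have hne : M.toFinset.Nonempty := ⟨n, Multiset.mem_toFinset.mpr hn⟩
  have htop := Multiset.mem_toFinset.mp (M.toFinset.max'_mem hne)
  calc gm m n ≤ M.toFinset.max' hne := Nat.sInf_le ⟨M, hM, hn, htop, fun a ha =>
        ⟨(hbound a ha).1, M.toFinset.le_max' a (Multiset.mem_toFinset.mpr ha)⟩⟩
    _ < s := (hbound _ htop).2

theorem exists_isMProdSeqFromTo {m n : ℕ} (hm : 2 ≤ m) (hn : 0 < n) :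
    ∃ s M, IsMProdSeqFromTo m n s M := by
  have hlt : n < 2 ^ m * n ^ (m - 1) :=
    calc n < 2 ^ m * n := lt_mul_left hn (Nat.one_lt_two_pow (by omega))
      _ ≤ 2 ^ m * n ^ (m - 1) := Nat.mul_le_mul_left _ (Nat.le_self_pow (by omega) n)
  refine ⟨2 ^ m * n ^ (m - 1), {n, 2 ^ m * n ^ (m - 1)},
    ⟨by simp, ?_, fun a => ?_, 2 * n, ?_⟩, by simp, by simp, ?_⟩
  · simp only [Multiset.insert_eq_cons, Multiset.mem_cons, Multiset.mem_singleton]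
    rintro a (rfl | rfl) <;> omega
  · have hnd : ({n, 2 ^ m * n ^ (m - 1)} : Multiset ℕ).Nodup := by simp [hlt.ne]
    exact (Multiset.nodup_iff_count_le_one.mp hnd a).trans_lt (by omega)
  · rw [Multiset.insert_eq_cons, Multiset.prod_cons, Multiset.prod_singleton, mul_pow,
      mul_left_comm, ← pow_succ', Nat.sub_add_cancel (by omega)]
  · simp only [Multiset.insert_eq_cons, Multiset.mem_cons, Multiset.mem_singleton]
    rintro a (rfl | rfl) <;> omega

theorem exists_isMProdSeqFromTo_gm {m n : ℕ} (hm : 2 ≤ m) (hn : 0 < n) :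
    ∃ M, IsMProdSeqFromTo m n (gm m n) M :=
  Nat.sInf_mem (exists_isMProdSeqFromTo hm hn)

theorem gm_lt_of_isMProdSeqFromTo {m n n' s : ℕ} (hm : m.Prime) (hlt : n < n')
    {M M' : Multiset ℕ} (hM : IsMProdSeqFromTo m n s M) (hM' : IsMProdSeqFromTo m n' s M') :
    gm m n < s := by
  obtain ⟨⟨-, hpos, hcount, R, hR⟩, hnM, -, hbound⟩ := hM
  obtain ⟨⟨-, hpos', hcount', R', hR'⟩, -, hsM', hbound'⟩ := hM'
  have hc' : ¬m ∣ M'.count s :=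
    Nat.not_dvd_of_pos_of_lt (Multiset.count_pos.mpr hsM') (hcount' s)
  obtain ⟨k, hk⟩ := Nat.exists_dvd_add_mul_of_not_dvd hm hc' (M.count s)
  set P := M + k • M'
  have hPcount : ∀ a, P.count a = M.count a + k * M'.count a := fun a => by
    simp [P, Multiset.count_nsmul]
  have hPmem : ∀ a ∈ P, a ∈ M ∨ a ∈ M' := fun a ha =>
    (Multiset.mem_add.mp ha).imp id Multiset.mem_of_mem_nsmul
  have hnP : P.count n = M.count n := by
    rw [hPcount, Multiset.count_eq_zero.mpr fun h => (hbound' n h).1.not_gt hlt, mul_zero,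
      add_zero]
  obtain ⟨N, hN, hNP, hNcount⟩ := exists_isMProdSeq_le_count_eq_mod (b := n) hm.ne_zero
    (fun a ha => (hPmem a ha).elim (hpos a) (hpos' a))
    (by rw [Multiset.prod_add, Multiset.prod_nsmul, hR, hR', ← pow_mul, mul_comm m, pow_mul,
      ← mul_pow])
    (hnP ▸ Nat.not_dvd_of_pos_of_lt (Multiset.count_pos.mpr hnM) (hcount n))
  have hnN : n ∈ N := by
    rw [← Multiset.count_pos, hNcount, hnP, Nat.mod_eq_of_lt (hcount n)]
    exact Multiset.count_pos.mpr hnM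
  have hsN : s ∉ N := by
    rw [← Multiset.count_eq_zero, hNcount, hPcount]
    exact Nat.mod_eq_zero_of_dvd hk
  refine gm_lt hN hnN fun a ha => ?_
  have : a ≠ s := fun h => hsN (h ▸ ha)
  rcases hPmem a (Multiset.mem_of_le hNP ha) with h | h
  · have := hbound a h; omega
  · have := hbound' a h; omega

theorem stmt_14 (m : ℕ) (hm : m.Prime) :
    ∀ n n' : ℕ, 0 < n → n < n' → gm m n ≠ gm m n' := by
  intro n n' hn hlt heq
  obtain ⟨M, hM⟩ := exists_isMProdSeqFromTo_gm hm.two_le hn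
  obtain ⟨M', hM'⟩ := exists_isMProdSeqFromTo_gm hm.two_le (hn.trans hlt)
  rw [← heq] at hM'
  exact (gm_lt_of_isMProdSeqFromTo hm hlt hM hM').false
end

section
/- If m is prime, then for every composite (non-prime, non-zero) natural number n in ℕ∖ℙ there exists k ∈ ℕ with g_m(k) = n; i.e., g_m maps ℕ onto ℕ∖ℙ. -/
/-- Reduce the multiplicities of a multiset modulo `m`. -/
lemma exists_reduce (m : ℕ) (N : Multiset ℕ) :
    ∃ Q R : Multiset ℕ, N = m • Q + R ∧ ∀ a, R.count a = N.count a % m := by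
  classical
  refine ⟨(N.toFinsupp.mapRange (· / m) (Nat.zero_div m)).toMultiset,
      (N.toFinsupp.mapRange (· % m) (Nat.zero_mod m)).toMultiset, ?_, ?_⟩
  · rw [Multiset.ext]
    intro a
    rw [Multiset.count_add, Multiset.count_nsmul, Finsupp.count_toMultiset,
      Finsupp.count_toMultiset, Finsupp.mapRange_apply, Finsupp.mapRange_apply]
    exact (Nat.div_add_mod _ m).symm
  · intro a
    rw [Finsupp.count_toMultiset, Finsupp.mapRange_apply]
    rfl

lemma pow_factor {X D W m : ℕ} (hm : m ≠ 0) (hD : 0 < D) (h : X * D ^ m = W ^ m) :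
    ∃ E : ℕ, X = E ^ m := by
  have hdvd : D ^ m ∣ W ^ m := ⟨X, by rw [← h]; ring⟩
  obtain ⟨E, rfl⟩ := (Nat.pow_dvd_pow_iff hm).mp hdvd
  refine ⟨E, ?_⟩
  have hpos : 0 < D ^ m := pow_pos hD m
  rw [mul_pow] at h
  have h' : D ^ m * X = D ^ m * E ^ m := by rw [mul_comm (D ^ m) X, h]
  exact Nat.eq_of_mul_eq_mul_left hpos h'

/-- elements of a reduced multiset come from the original. -/
lemma mem_of_reduced {m : ℕ} {N R : Multiset ℕ} (hR : ∀ a, R.count a = N.count a % m)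
    {a : ℕ} (ha : a ∈ R) : a ∈ N := by
  rw [← Multiset.count_pos] at ha ⊢
  rw [hR a] at ha
  by_contra h
  push_neg at h
  have : N.count a = 0 := by omega
  rw [this] at ha
  simp at ha

/-- Main combination lemma: if some `m`-product sequence in `[k, c]` hits both `k` and `c`,
then `c` is in the range of `gm m`. -/
lemma gm_eq_of_witness (m : ℕ) (hm : m.Prime) (c : ℕ)
    (hK : ∃ k, ∃ M : Multiset ℕ, IsMProdSeq m M ∧ k ∈ M ∧ c ∈ M ∧ ∀ a ∈ M, k ≤ a ∧ a ≤ c) :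
    ∃ k : ℕ, gm m k = c := by
  classical
  haveI : Fact m.Prime := ⟨hm⟩
  haveI : NeZero m := ⟨hm.pos.ne'⟩
  set K : Set ℕ := {k | ∃ M : Multiset ℕ,
      IsMProdSeq m M ∧ k ∈ M ∧ c ∈ M ∧ ∀ a ∈ M, k ≤ a ∧ a ≤ c} with hKdef
  have hKne : K.Nonempty := hK
  have hbdd : BddAbove K := by
    refine ⟨c, fun k hk => ?_⟩
    obtain ⟨M, _, hkM, _, hb⟩ := hk
    exact (hb k hkM).2
  set k0 := sSup K with hk0def
  have hk0K : k0 ∈ K := Nat.sSup_mem hKne hbdd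
  obtain ⟨M, hMseq, hkM, hcM, hbM⟩ := hk0K
  refine ⟨k0, ?_⟩
  have hcS : c ∈ {s | ∃ M : Multiset ℕ,
      IsMProdSeq m M ∧ k0 ∈ M ∧ s ∈ M ∧ ∀ a ∈ M, k0 ≤ a ∧ a ≤ s} :=
    ⟨M, hMseq, hkM, hcM, hbM⟩
  have hSne : {s | ∃ M : Multiset ℕ,
      IsMProdSeq m M ∧ k0 ∈ M ∧ s ∈ M ∧ ∀ a ∈ M, k0 ≤ a ∧ a ≤ s}.Nonempty := ⟨c, hcS⟩
  have hsmem := Nat.sInf_mem hSne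
  have hsle : gm m k0 ≤ c := Nat.sInf_le hcS
  rw [gm] at hsle ⊢
  set s := sInf {s | ∃ M : Multiset ℕ,
      IsMProdSeq m M ∧ k0 ∈ M ∧ s ∈ M ∧ ∀ a ∈ M, k0 ≤ a ∧ a ≤ s} with hsdef
  rcases eq_or_lt_of_le hsle with h | hlt
  · exact h
  exfalso
  obtain ⟨M', hM'seq, hkM', hsM', hbM'⟩ := hsmem
  have hx1 : 1 ≤ M.count k0 := Multiset.one_le_count_iff_mem.mpr hkM
  have hxm : M.count k0 < m := hMseq.2.2.1 k0
  have hx'1 : 1 ≤ M'.count k0 := Multiset.one_le_count_iff_mem.mpr hkM'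
  have hx'm : M'.count k0 < m := hM'seq.2.2.1 k0
  have hx'0 : ((M'.count k0 : ℕ) : ZMod m) ≠ 0 := by
    rw [Ne, ZMod.natCast_eq_zero_iff]
    intro hd
    exact absurd (Nat.le_of_dvd (by omega) hd) (by omega)
  set t : ℕ := ((-(M.count k0 : ZMod m)) * (M'.count k0 : ZMod m)⁻¹).val with htdef
  have hcong : m ∣ M.count k0 + t * M'.count k0 := by
    rw [← ZMod.natCast_eq_zero_iff]
    push_cast
    have ht : ((t : ℕ) : ZMod m) =
        (-(M.count k0 : ZMod m)) * (M'.count k0 : ZMod m)⁻¹ := ZMod.natCast_zmod_val _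
    rw [ht, mul_assoc, inv_mul_cancel₀ hx'0, mul_one]
    ring
  set N := M + t • M' with hNdef
  obtain ⟨Q, R, hNQR, hRcount⟩ := exists_reduce m N
  have hboundsN : ∀ a ∈ N, 0 < a ∧ k0 ≤ a ∧ a ≤ c := by
    intro a ha
    rw [hNdef, Multiset.mem_add] at ha
    rcases ha with ha | ha
    · exact ⟨hMseq.2.1 a ha, (hbM a ha).1, (hbM a ha).2⟩
    · have ha' : a ∈ M' := Multiset.mem_of_mem_nsmul ha
      exact ⟨hM'seq.2.1 a ha', (hbM' a ha').1, le_of_lt (lt_of_le_of_lt (hbM' a ha').2 hlt)⟩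
  have hcountN : ∀ a, N.count a = M.count a + t * M'.count a := by
    intro a
    rw [hNdef, Multiset.count_add, Multiset.count_nsmul]
  have hcnotM' : M'.count c = 0 := by
    rw [Multiset.count_eq_zero]
    intro hc
    exact absurd (hbM' c hc).2 (not_le.mpr hlt)
  have hcR : c ∈ R := by
    rw [← Multiset.count_pos, hRcount, hcountN, hcnotM', mul_zero, add_zero]
    have hy1 : 1 ≤ M.count c := Multiset.one_le_count_iff_mem.mpr hcM
    have hym : M.count c < m := hMseq.2.2.1 c
    rw [Nat.mod_eq_of_lt hym]
    omega
  have hk0R : k0 ∉ R := by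
    intro hk
    rw [← Multiset.count_pos, hRcount, hcountN] at hk
    obtain ⟨u, hu⟩ := hcong
    rw [hu, Nat.mul_mod_right] at hk
    exact lt_irrefl 0 hk
  -- R is an m-product sequence
  have hRne : R ≠ 0 := by
    intro h0
    rw [h0] at hcR
    simp at hcR
  have hRpos : ∀ a ∈ R, 0 < a := fun a ha => (hboundsN a (mem_of_reduced hRcount ha)).1
  have hRcnt : ∀ a, R.count a < m := fun a => by
    rw [hRcount]; exact Nat.mod_lt _ hm.pos
  have hRpow : ∃ E : ℕ, R.prod = E ^ m := by
    obtain ⟨RM, hRM⟩ := hMseq.2.2.2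
    obtain ⟨RM', hRM'⟩ := hM'seq.2.2.2
    have hNprod : N.prod = (RM * RM' ^ t) ^ m := by
      rw [hNdef, Multiset.prod_add, Multiset.prod_nsmul, hRM, hRM']
      rw [mul_pow, ← pow_mul, ← pow_mul, Nat.mul_comm t m]
    have hQpos : 0 < Q.prod := by
      apply Multiset.prod_pos
      intro a ha
      have : a ∈ N := by
        rw [hNQR, Multiset.mem_add]
        left
        exact Multiset.mem_nsmul.mpr ⟨hm.pos.ne', ha⟩
      exact (hboundsN a this).1
    apply pow_factor hm.pos.ne' hQpos
    rw [hNQR, Multiset.prod_add, Multiset.prod_nsmul] at hNprod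
    exact (mul_comm _ _).trans hNprod
  -- minimum of R
  set k1 := sInf {a | a ∈ R} with hk1def
  have hk1R : k1 ∈ R := Nat.sInf_mem (⟨c, by exact hcR⟩ : {a | a ∈ R}.Nonempty)
  have hk1le : ∀ a ∈ R, k1 ≤ a := fun a ha => Nat.sInf_le (by exact ha)
  have hk1gt : k0 < k1 :=
    lt_of_le_of_ne ((hboundsN k1 (mem_of_reduced hRcount hk1R)).2.1)
      (fun h => hk0R (h ▸ hk1R))
  have hk1K : k1 ∈ K := by
    refine ⟨R, ⟨hRne, hRpos, hRcnt, hRpow⟩, hk1R, hcR, fun a ha => ?_⟩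
    exact ⟨hk1le a ha, (hboundsN a (mem_of_reduced hRcount ha)).2.2⟩
  exact absurd (le_csSup hbdd hk1K) (not_le.mpr hk1gt)

theorem stmt_15 (m : ℕ) (hm : m.Prime) :
    ∀ n : ℕ, n ≠ 0 → ¬ n.Prime → ∃ k : ℕ, gm m k = n := by
  intro n hn0 hnp
  apply gm_eq_of_witness m hm n
  rcases eq_or_lt_of_le (Nat.one_le_iff_ne_zero.mpr hn0) with h1 | h2
  · -- n = 1
    refine ⟨1, {1}, ⟨by simp, by simp, fun a => ?_, 1, by simp⟩, by simp, by simp [← h1], ?_⟩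
    · have : Multiset.count a {1} ≤ 1 := by
        rw [Multiset.count_singleton]
        split <;> omega
      have := hm.two_le
      omega
    · intro a ha
      rw [Multiset.mem_singleton] at ha
      subst ha
      omega
  · -- n composite
    obtain ⟨a, han, ha2, haltn⟩ := Nat.exists_dvd_of_not_prime2 h2 hnp
    obtain ⟨b, hb⟩ := han
    have hb2 : 2 ≤ b := by
      rcases Nat.lt_or_ge b 2 with h | h
      · interval_cases b <;> omega
      · exact h
    have hbn : b ≤ n := Nat.le_of_dvd (by omega) ⟨a, by rw [hb]; ring⟩
    -- the base multiset
    set N0 : Multiset ℕ := Multiset.replicate (m - 1) a + Multiset.replicate (m - 1) b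
        + {n} with hN0def
    obtain ⟨Q, R, hQR, hRcount⟩ := exists_reduce m N0
    have hN0mem : ∀ v ∈ N0, (v = a ∨ v = b ∨ v = n) := by
      intro v hv
      rw [hN0def, Multiset.mem_add, Multiset.mem_add] at hv
      rcases hv with (hv | hv) | hv
      · exact Or.inl (Multiset.eq_of_mem_replicate hv)
      · exact Or.inr (Or.inl (Multiset.eq_of_mem_replicate hv))
      · exact Or.inr (Or.inr (Multiset.mem_singleton.mp hv))
    have hnR : n ∈ R := by
      rw [← Multiset.count_pos, hRcount, hN0def]
      have hna : n ≠ a := by omega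
      have hnb : n ≠ b := by
        intro h
        have : a = 1 := by
          have hnpos : 0 < n := by omega
          have := hb
          nlinarith
        omega
      rw [Multiset.count_add, Multiset.count_add, Multiset.count_replicate,
        Multiset.count_replicate, Multiset.count_singleton]
      have := hm.two_le
      rw [if_neg (by omega : ¬ a = n), if_neg (by omega : ¬ b = n), if_pos rfl]
      simp only [add_zero, zero_add]
      rw [Nat.mod_eq_of_lt (by omega : 1 < m)]
      omega
    have h1R : Multiset.count 1 R = 0 := by
      rw [hRcount, hN0def]
      have : Multiset.count 1 (Multiset.replicate (m - 1) a + Multiset.replicate (m - 1) b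
          + ({n} : Multiset ℕ)) = 0 := by
        rw [Multiset.count_eq_zero]
        intro h
        rcases hN0mem 1 h with h' | h' | h' <;> omega
      rw [this]
      simp
    refine ⟨1, 1 ::ₘ R, ⟨by simp, ?_, ?_, ?_⟩, Multiset.mem_cons_self 1 R,
        Multiset.mem_cons_of_mem hnR, ?_⟩
    · intro v hv
      rcases Multiset.mem_cons.mp hv with h | h
      · omega
      · rcases hN0mem v (mem_of_reduced hRcount h) with h' | h' | h' <;> omega
    · intro v
      rcases eq_or_ne v 1 with rfl | hv1
      · rw [Multiset.count_cons_self, h1R]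
        have := hm.two_le
        omega
      · rw [Multiset.count_cons_of_ne hv1, hRcount]
        exact Nat.mod_lt _ hm.pos
    · -- product is an m-th power
      have hprodN0 : N0.prod = (a * b) ^ m := by
        rw [hN0def, Multiset.prod_add, Multiset.prod_add, Multiset.prod_replicate,
          Multiset.prod_replicate, Multiset.prod_singleton, hb]
        have hm1 : m - 1 + 1 = m := by have := hm.pos; omega
        calc a ^ (m - 1) * b ^ (m - 1) * (a * b)
            = (a ^ (m - 1) * a) * (b ^ (m - 1) * b) := by ring
          _ = a ^ m * b ^ m := by rw [← pow_succ, ← pow_succ, hm1]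
          _ = (a * b) ^ m := (mul_pow a b m).symm
      have hQpos : 0 < Q.prod := by
        apply Multiset.prod_pos
        intro v hv
        have : v ∈ N0 := by
          rw [hQR, Multiset.mem_add]
          left
          exact Multiset.mem_nsmul.mpr ⟨hm.pos.ne', hv⟩
        rcases hN0mem v this with h' | h' | h' <;> omega
      have hfac : R.prod * Q.prod ^ m = (a * b) ^ m := by
        have : N0.prod = Q.prod ^ m * R.prod := by
          rw [hQR, Multiset.prod_add, Multiset.prod_nsmul]
        rw [← hprodN0, mul_comm]
        exact this.symm
      obtain ⟨E, hE⟩ := pow_factor hm.pos.ne' hQpos hfac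
      exact ⟨E, by rw [Multiset.prod_cons, one_mul, hE]⟩
    · intro v hv
      rcases Multiset.mem_cons.mp hv with h | h
      · omega
      · rcases hN0mem v (mem_of_reduced hRcount h) with h' | h' | h' <;> omega
end

section
/- Let p = x² + 1 be prime for some positive integer x, and let t ≥ 1. Then g_{4t}(p(p−1)) = p² = g_{4t}(p²); i.e., x²(x²+1) and (x²+1)² map to the same value under g_{4t}, witnessed by the 4t-product sequence consisting of x²(x²+1) repeated 2t times and (x²+1)² repeated t times. -/
lemma fact_prod (p : ℕ) (M : Multiset ℕ) (h : ∀ a ∈ M, 0 < a) :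
    M.prod.factorization p = (M.map (fun a => a.factorization p)).sum := by
  induction M using Multiset.induction_on with
  | empty => simp
  | cons a M ih =>
    have ha : a ≠ 0 := (h a (Multiset.mem_cons_self a M)).ne'
    have hM : M.prod ≠ 0 :=
      (Multiset.prod_pos (fun b hb => h b (Multiset.mem_cons_of_mem hb))).ne'
    simp [Multiset.prod_cons, Nat.factorization_mul ha hM,
      ih (fun b hb => h b (Multiset.mem_cons_of_mem hb))]

lemma sum_ite_count (n : ℕ) (M : Multiset ℕ) :
    (M.map (fun a => if a = n then 1 else 0)).sum = M.count n := by
  induction M using Multiset.induction_on with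
  | empty => simp
  | cons a M ih =>
    by_cases h : a = n
    · subst h; simp [Multiset.count_cons, ih, Nat.add_comm]
    · simp [Multiset.count_cons, ih, h, Ne.symm h]

lemma lower_bound (x t : ℕ) (hx : 0 < x) (hp : (x ^ 2 + 1).Prime) (ht : 1 ≤ t)
    (s : ℕ) (M : Multiset ℕ) (hM : IsMProdSeq (4 * t) M)
    (hn : x ^ 2 * (x ^ 2 + 1) ∈ M) (hbd : ∀ a ∈ M, x ^ 2 * (x ^ 2 + 1) ≤ a ∧ a ≤ s) :
    (x ^ 2 + 1) ^ 2 ≤ s := by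
  set p := x ^ 2 + 1 with hpdef
  set n := x ^ 2 * p with hndef
  by_contra hlt
  push_neg at hlt
  obtain ⟨hM0, hpos, hcount, R, hR⟩ := hM
  have hx2pos : 0 < x ^ 2 := by positivity
  have hx2lt : x ^ 2 < p := by omega
  -- factorization of n at p is 1
  have hfn : n.factorization p = 1 := by
    have h1 : ¬ p ∣ x ^ 2 := Nat.not_dvd_of_pos_of_lt hx2pos hx2lt
    have h2 : ¬ p ∣ x := Nat.not_dvd_of_pos_of_lt hx (by nlinarith)
    rw [hndef, Nat.factorization_mul hx2pos.ne' hp.pos.ne']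
    simp [Nat.factorization_eq_zero_of_not_dvd h1, Nat.factorization_eq_zero_of_not_dvd h2,
      Nat.Prime.factorization_self hp]
  -- each element's factorization at p
  have key : ∀ a ∈ M, a.factorization p = if a = n then 1 else 0 := by
    intro a ha
    obtain ⟨h1, h2⟩ := hbd a ha
    by_cases hd : p ∣ a
    · obtain ⟨k, hk⟩ := hd
      have hk1 : x ^ 2 ≤ k := by
        have : p * x ^ 2 ≤ p * k := by
          rw [← hk, mul_comm p (x ^ 2)]; exact h1
        exact Nat.le_of_mul_le_mul_left this hp.pos
      have hk2 : k < p := by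
        have : p * k < p * p := by
          have : a < p ^ 2 := lt_of_le_of_lt h2 hlt
          rw [← hk]; nlinarith
        exact Nat.lt_of_mul_lt_mul_left this
      have : k = x ^ 2 := by omega
      have han : a = n := by rw [hk, this, hndef]; ring
      simp [han, hfn]
    · have han : a ≠ n := by
        intro h; apply hd; rw [h, hndef]; exact ⟨x ^ 2, mul_comm _ _⟩
      simp [han, Nat.factorization_eq_zero_of_not_dvd hd]
  -- factorization of the product
  have hprod : M.prod.factorization p = M.count n := by
    rw [fact_prod p M hpos, Multiset.map_congr rfl key, sum_ite_count]
  have hpow : M.prod.factorization p = 4 * t * R.factorization p := by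
    rw [hR, Nat.factorization_pow]; simp [mul_comm]
  have hc1 : 1 ≤ M.count n := Multiset.one_le_count_iff_mem.mpr hn
  have hc2 : M.count n < 4 * t := hcount n
  have := hprod.symm.trans hpow
  rcases Nat.eq_zero_or_pos (R.factorization p) with h0 | h0
  · rw [h0, Nat.mul_zero] at this; omega
  · have h4 : 4 * t ≤ 4 * t * R.factorization p := Nat.le_mul_of_pos_right _ h0
    omega

theorem stmt_18 (x t : ℕ) (hx : 0 < x) (hp : (x ^ 2 + 1).Prime) (ht : 1 ≤ t) :
    gm (4 * t) (x ^ 2 * (x ^ 2 + 1)) = (x ^ 2 + 1) ^ 2 ∧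
    gm (4 * t) ((x ^ 2 + 1) ^ 2) = (x ^ 2 + 1) ^ 2 ∧
    IsMProdSeq (4 * t)
      (Multiset.replicate (2 * t) (x ^ 2 * (x ^ 2 + 1)) +
        Multiset.replicate t ((x ^ 2 + 1) ^ 2)) := by
  have hx2pos : 0 < x ^ 2 := by positivity
  have hne : x ^ 2 * (x ^ 2 + 1) ≠ (x ^ 2 + 1) ^ 2 := by nlinarith [sq_nonneg x]
  have hnles : x ^ 2 * (x ^ 2 + 1) ≤ (x ^ 2 + 1) ^ 2 := by nlinarith
  set n := x ^ 2 * (x ^ 2 + 1) with hndef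
  set s := (x ^ 2 + 1) ^ 2 with hsdef
  set M₀ := Multiset.replicate (2 * t) n + Multiset.replicate t s with hM₀
  have hseq : IsMProdSeq (4 * t) M₀ := by
    refine ⟨?_, ?_, ?_, x * (x ^ 2 + 1), ?_⟩
    · intro h
      have := congrArg Multiset.card h
      simp [hM₀] at this
      omega
    · intro a ha
      rw [hM₀, Multiset.mem_add] at ha
      rcases ha with ha | ha <;> rw [Multiset.eq_of_mem_replicate ha] <;> positivity
    · intro a
      rw [hM₀, Multiset.count_add, Multiset.count_replicate, Multiset.count_replicate]
      by_cases h1 : n = a <;> by_cases h2 : s = a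
      · exact absurd (h1.trans h2.symm) hne
      · simp only [if_pos h1, if_neg h2]; omega
      · simp only [if_neg h1, if_pos h2]; omega
      · simp only [if_neg h1, if_neg h2]; omega
    · rw [hM₀, Multiset.prod_add, Multiset.prod_replicate, Multiset.prod_replicate]
      calc n ^ (2 * t) * s ^ t = (n ^ 2) ^ t * s ^ t := by rw [pow_mul]
        _ = (n ^ 2 * s) ^ t := (mul_pow _ _ _).symm
        _ = ((x * (x ^ 2 + 1)) ^ 4) ^ t := by rw [hndef, hsdef]; ring
        _ = (x * (x ^ 2 + 1)) ^ (4 * t) := by rw [← pow_mul]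
  have hmemn : n ∈ M₀ := by
    rw [hM₀, Multiset.mem_add]; left
    exact Multiset.mem_replicate.mpr ⟨by omega, rfl⟩
  have hmems : s ∈ M₀ := by
    rw [hM₀, Multiset.mem_add]; right
    exact Multiset.mem_replicate.mpr ⟨by omega, rfl⟩
  have hbd : ∀ a ∈ M₀, n ≤ a ∧ a ≤ s := by
    intro a ha
    rw [hM₀, Multiset.mem_add] at ha
    rcases ha with ha | ha <;> rw [Multiset.eq_of_mem_replicate ha] <;>
      exact ⟨by linarith, by linarith⟩
  unfold gm
  refine ⟨?_, ?_, hseq⟩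
  · apply le_antisymm
    · exact Nat.sInf_le ⟨M₀, hseq, hmemn, hmems, hbd⟩
    · apply le_csInf
      · exact ⟨s, M₀, hseq, hmemn, hmems, hbd⟩
      rintro b ⟨M, hM, hnM, hbM, hb⟩
      exact lower_bound x t hx hp ht b M hM hnM hb
  · have hseq2 : IsMProdSeq (4 * t) (Multiset.replicate (2 * t) s) := by
      refine ⟨?_, ?_, ?_, (x ^ 2 + 1), ?_⟩
      · intro h
        have := congrArg Multiset.card h
        simp at this
        omega
      · intro a ha
        rw [Multiset.eq_of_mem_replicate ha]; positivity
      · intro a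
        rw [Multiset.count_replicate]
        split <;> omega
      · rw [Multiset.prod_replicate, hsdef, ← pow_mul]
        congr 1; ring
    have hmem2 : s ∈ Multiset.replicate (2 * t) s :=
      Multiset.mem_replicate.mpr ⟨by omega, rfl⟩
    apply le_antisymm
    · exact Nat.sInf_le ⟨Multiset.replicate (2 * t) s, hseq2, hmem2, hmem2,
        fun a ha => by rw [Multiset.eq_of_mem_replicate ha]; exact ⟨le_refl _, le_refl _⟩⟩
    · apply le_csInf
      · exact ⟨s, Multiset.replicate (2 * t) s, hseq2, hmem2, hmem2,
          fun a ha => by rw [Multiset.eq_of_mem_replicate ha]; exact ⟨le_refl _, le_refl _⟩⟩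
      rintro b ⟨M, hM, hnM, hbM, hb⟩
      exact (hb s hnM).2
end

section
/- Let m ≥ 2 and suppose n_1 < n_2 < … < n_k are positive integers with g_m(n_1) = g_m(n_2) = … = g_m(n_k). Then k < d(m), the number of divisors of m. -/
/-! ### Auxiliary machinery -/

/-- Delete all copies of `s` and reduce all other multiplicities mod `m`. -/
def reduceAt (m s : ℕ) (N : Multiset ℕ) : Multiset ℕ :=
  ∑ v ∈ N.toFinset, Multiset.replicate (if v = s then 0 else N.count v % m) v

lemma count_reduceAt (m s : ℕ) (N : Multiset ℕ) (a : ℕ) :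
    (reduceAt m s N).count a = if a = s then 0 else N.count a % m := by
  rw [reduceAt, Multiset.count_sum']
  simp only [Multiset.count_replicate]
  have : (∑ v ∈ N.toFinset, if v = a then (if v = s then 0 else N.count v % m) else 0)
      = if a ∈ N.toFinset then (if a = s then 0 else N.count a % m) else 0 :=
    Finset.sum_ite_eq' _ _ _
  rw [this]
  by_cases h : a ∈ N.toFinset
  · simp [h]
  · have : N.count a = 0 :=
      Multiset.count_eq_zero.mpr (fun hc => h (Multiset.mem_toFinset.mpr hc))
    simp [h, this]

lemma mem_reduceAt {m s : ℕ} {N : Multiset ℕ} {a : ℕ} (h : a ∈ reduceAt m s N) :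
    a ∈ N ∧ a ≠ s := by
  have hc : 0 < (reduceAt m s N).count a := Multiset.count_pos.mpr h
  rw [count_reduceAt] at hc
  by_cases hs : a = s
  · simp [hs] at hc
  · refine ⟨?_, hs⟩
    rw [if_neg hs] at hc
    have : 0 < N.count a := lt_of_lt_of_le hc (Nat.mod_le _ _)
    exact Multiset.count_pos.mp this

lemma prod_reduceAt (m s : ℕ) (N : Multiset ℕ) (hm : 0 < m) (hpos : ∀ a ∈ N, 0 < a)
    (hs : m ∣ N.count s) :
    ∃ K : ℕ, 0 < K ∧ N.prod = (reduceAt m s N).prod * K ^ m := by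
  refine ⟨∏ v ∈ N.toFinset, v ^ (if v = s then N.count s / m else N.count v / m), ?_, ?_⟩
  · refine Finset.prod_pos fun v hv => ?_
    exact pow_pos (hpos v (Multiset.mem_toFinset.mp hv)) _
  · rw [Finset.prod_multiset_count N, reduceAt, Multiset.prod_sum]
    simp only [Multiset.prod_replicate]
    rw [← Finset.prod_pow, ← Finset.prod_mul_distrib]
    refine Finset.prod_congr rfl fun v hv => ?_
    by_cases hvs : v = s
    · subst hvs
      rw [if_pos rfl, if_pos rfl, pow_zero, one_mul, ← pow_mul, Nat.div_mul_cancel hs]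
    · rw [if_neg hvs, if_neg hvs, ← pow_mul, ← pow_add, Nat.mod_add_div']

lemma exists_e (m ri rj : ℕ) (hm : 0 < m) (h : Nat.gcd ri m ∣ rj) :
    ∃ e : ℕ, m ∣ e * ri + rj := by
  obtain ⟨t, ht⟩ := h
  have hd : (Nat.gcd ri m : ℤ) = ri * Nat.gcdA ri m + m * Nat.gcdB ri m := Nat.gcd_eq_gcd_ab ri m
  set a : ℤ := Nat.gcdA ri m with ha
  set e' : ℤ := (-(a * t)) % m with he'
  have hm' : (0:ℤ) < m := by exact_mod_cast hm
  have he'0 : 0 ≤ e' := Int.emod_nonneg _ (ne_of_gt hm')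
  refine ⟨e'.toNat, ?_⟩
  have key : (m:ℤ) ∣ (e'.toNat * ri + rj : ℕ) := by
    push_cast [Int.toNat_of_nonneg he'0]
    have h1 : (m:ℤ) ∣ e' - (-(a * t)) := by
      have := Int.dvd_self_sub_of_emod_eq (a := -(a * t)) (b := m) (c := e') rfl
      have h' := dvd_neg.mpr this
      rwa [neg_sub] at h' 
    have h2 : (m:ℤ) ∣ (-(a * t)) * ri + rj := by
      have : ((-(a * t)) * ri + rj : ℤ) = m * (Nat.gcdB ri m * t) := by
        have hrj : (rj : ℤ) = (ri * a + m * Nat.gcdB ri m) * t := by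
          rw [← hd]; exact_mod_cast congrArg (Nat.cast : ℕ → ℤ) ht
        rw [hrj]; ring
      exact ⟨_, this⟩
    have h3 : (e' * ri + rj) - ((-(a * t)) * ri + rj) = (e' - (-(a * t))) * ri := by ring
    have h4 : (m:ℤ) ∣ (e' * ri + rj) - ((-(a * t)) * ri + rj) := by
      rw [h3]; exact Dvd.dvd.mul_right h1 ri
    have h5 : e' * ri + rj = ((e' * ri + rj) - ((-(a * t)) * ri + rj)) + ((-(a * t)) * ri + rj) := by
      ring
    rw [h5]; exact dvd_add h4 h2
  exact_mod_cast key

/-- The set defining `gm m n` is nonempty, so the infimum is attained. -/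
lemma gmSet_nonempty (m n : ℕ) (hm : 2 ≤ m) (hn : 0 < n) :
    {s | ∃ M : Multiset ℕ, IsMProdSeq m M ∧ n ∈ M ∧ s ∈ M ∧ ∀ a ∈ M, n ≤ a ∧ a ≤ s}.Nonempty := by
  classical
  set S : ℕ := ∑ i ∈ Finset.range (m - 1), i with hS
  set a : ℕ := (m - S % m) % m + m with haa
  have hma : ∀ i ∈ Finset.range (m - 1), i < a := by
    intro i hi
    have : i < m - 1 := Finset.mem_range.mp hi
    omega
  have hdvd : m ∣ S + a := by
    apply Nat.dvd_of_mod_eq_zero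
    have h1 : S % m < m := Nat.mod_lt _ (by omega)
    rw [Nat.add_mod, Nat.add_mod_right, Nat.mod_mod_of_dvd _ dvd_rfl]
    rcases Nat.eq_zero_or_pos (S % m) with h | h
    · simp [h]
    · have : (m - S % m) % m = m - S % m := Nat.mod_eq_of_lt (by omega)
      rw [this]
      have : S % m + (m - S % m) = m := by omega
      rw [this, Nat.mod_self]
  set M : Multiset ℕ :=
    (Multiset.range (m - 1)).map (fun i => n * 2 ^ i) + {n * 2 ^ a} with hM
  have hmem : ∀ x ∈ M, ∃ i, i ≤ a ∧ x = n * 2 ^ i := by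
    intro x hx
    rw [hM, Multiset.mem_add] at hx
    rcases hx with hx | hx
    · obtain ⟨i, hi, rfl⟩ := Multiset.mem_map.mp hx
      exact ⟨i, le_of_lt (hma i (by simpa using hi)), rfl⟩
    · rw [Multiset.mem_singleton] at hx
      exact ⟨a, le_rfl, hx⟩
  refine ⟨n * 2 ^ a, M, ⟨?_, ?_, ?_, ?_⟩, ?_, ?_, ?_⟩
  · intro h0
    have : n * 2 ^ a ∈ M := by
      rw [hM, Multiset.mem_add]; right; exact Multiset.mem_singleton_self _
    rw [h0] at this; exact absurd this (Multiset.notMem_zero _)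
  · intro x hx
    obtain ⟨i, _, rfl⟩ := hmem x hx
    positivity
  · intro x
    have hnd : M.Nodup := by
      rw [hM]
      rw [Multiset.nodup_add]
      refine ⟨?_, Multiset.nodup_singleton _, ?_⟩
      · refine Multiset.Nodup.map ?_ (Multiset.nodup_range _)
        intro i j hij
        have h2 : (2:ℕ) ^ i = 2 ^ j := Nat.eq_of_mul_eq_mul_left hn hij
        exact Nat.pow_right_injective (le_refl 2) h2
      · rw [Multiset.disjoint_left]
        intro x hx hx'
        obtain ⟨i, hi, hxi⟩ := Multiset.mem_map.mp hx
        rw [Multiset.mem_singleton] at hx'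
        rw [hx'] at hxi
        have h2 : (2:ℕ) ^ a = 2 ^ i := Nat.eq_of_mul_eq_mul_left hn hxi.symm
        have := Nat.pow_right_injective (le_refl 2) h2
        have := hma i (by simpa using hi)
        omega
    have := Multiset.nodup_iff_count_le_one.mp hnd x
    omega
  · refine ⟨n * 2 ^ ((S + a) / m), ?_⟩
    have hprod : M.prod = n ^ m * 2 ^ (S + a) := by
      rw [hM, Multiset.prod_add, Multiset.prod_singleton]
      have : ((Multiset.range (m - 1)).map (fun i => n * 2 ^ i)).prod
          = ∏ i ∈ Finset.range (m - 1), n * 2 ^ i := rfl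
      rw [this, Finset.prod_mul_distrib, Finset.prod_const, Finset.prod_pow_eq_pow_sum,
        Finset.card_range, ← hS]
      have hm1 : m - 1 + 1 = m := by omega
      calc n ^ (m - 1) * 2 ^ S * (n * 2 ^ a) = n ^ (m - 1 + 1) * 2 ^ (S + a) := by ring
        _ = n ^ m * 2 ^ (S + a) := by rw [hm1]
    rw [hprod, mul_pow, ← pow_mul, Nat.div_mul_cancel hdvd]
  · rw [hM, Multiset.mem_add]; left
    refine Multiset.mem_map.mpr ⟨0, ?_, by simp⟩
    rw [Multiset.mem_range]; omega
  · rw [hM, Multiset.mem_add]; right; exact Multiset.mem_singleton_self _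
  · intro x hx
    obtain ⟨i, hia, rfl⟩ := hmem x hx
    constructor
    · calc n = n * 1 := (mul_one n).symm
        _ ≤ n * 2 ^ i := Nat.mul_le_mul_left n (Nat.one_le_two_pow)
    · exact Nat.mul_le_mul_left n (Nat.pow_le_pow_right (by norm_num) hia)

/-- Key lemma: if `gcd(count_s M_i, m)` divides `count_s M_j` where `n_j < n_i`,
then a sequence for `n_j` with smaller top element exists. -/
lemma key_lemma (m s nj ni : ℕ) (hm : 2 ≤ m) (hji : nj < ni)
    (Mi Mj : Multiset ℕ) (hMi : IsMProdSeq m Mi) (hMj : IsMProdSeq m Mj)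
    (hniMi : ni ∈ Mi) (hbi : ∀ a ∈ Mi, ni ≤ a ∧ a ≤ s)
    (hnjMj : nj ∈ Mj) (hbj : ∀ a ∈ Mj, nj ≤ a ∧ a ≤ s)
    (hdvd : Nat.gcd (Mi.count s) m ∣ Mj.count s) :
    gm m nj < s := by
  classical
  obtain ⟨hMi0, hMipos, hMicnt, Ri, hRi⟩ := hMi
  obtain ⟨hMj0, hMjpos, hMjcnt, Rj, hRj⟩ := hMj
  have hm0 : 0 < m := by omega
  obtain ⟨e, he⟩ := exists_e m (Mi.count s) (Mj.count s) hm0 hdvd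
  set N : Multiset ℕ := Mj + e • Mi with hN
  have hcount : ∀ v, N.count v = Mj.count v + e * Mi.count v := by
    intro v; rw [hN, Multiset.count_add, Multiset.count_nsmul]
  have hNs : m ∣ N.count s := by
    rw [hcount]
    have : Mj.count s + e * Mi.count s = e * Mi.count s + Mj.count s := by ring
    rw [this]; exact he
  have hNpos : ∀ a ∈ N, 0 < a := by
    intro x hx
    rw [hN, Multiset.mem_add] at hx
    rcases hx with hx | hx
    · exact hMjpos x hx
    · exact hMipos x (Multiset.mem_nsmul.mp hx).2
  have hNbound : ∀ a ∈ N, nj ≤ a ∧ a ≤ s := by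
    intro x hx
    rw [hN, Multiset.mem_add] at hx
    rcases hx with hx | hx
    · exact hbj x hx
    · have := hbi x (Multiset.mem_nsmul.mp hx).2
      omega
  set N' : Multiset ℕ := reduceAt m s N with hN'
  -- nj ∈ N'
  have hnjs : nj ≠ s := by
    have := hbi ni hniMi
    omega
  have hnjMi : Mi.count nj = 0 := by
    rw [Multiset.count_eq_zero]
    intro hmem
    have := hbi nj hmem
    omega
  have hnjN' : nj ∈ N' := by
    rw [← Multiset.count_pos, hN', count_reduceAt, if_neg hnjs, hcount, hnjMi, Nat.mul_zero,
      Nat.add_zero, Nat.mod_eq_of_lt (hMjcnt nj)]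
    exact Multiset.count_pos.mpr hnjMj
  -- N' is an m-product sequence
  have hN'cnt : ∀ v, N'.count v < m := by
    intro v
    rw [hN', count_reduceAt]
    by_cases hv : v = s
    · simp [hv]; omega
    · rw [if_neg hv]; exact Nat.mod_lt _ hm0
  have hN'prod : ∃ R : ℕ, N'.prod = R ^ m := by
    obtain ⟨K, hK0, hKeq⟩ := prod_reduceAt m s N hm0 hNpos hNs
    have hNprod : N.prod = (Rj * Ri ^ e) ^ m := by
      rw [hN, Multiset.prod_add, Multiset.prod_nsmul, hRi, hRj]
      ring
    rw [hNprod] at hKeq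
    have hdvdK : K ∣ Rj * Ri ^ e := by
      rw [← Nat.pow_dvd_pow_iff (by omega : m ≠ 0)]
      exact ⟨N'.prod, by rw [hKeq]; ring⟩
    obtain ⟨r, hr⟩ := hdvdK
    refine ⟨r, ?_⟩
    have : N'.prod * K ^ m = r ^ m * K ^ m := by
      rw [← hKeq, hr, mul_pow]; ring
    exact Nat.eq_of_mul_eq_mul_right (pow_pos hK0 m) this
  have hN'seq : IsMProdSeq m N' := by
    refine ⟨?_, ?_, hN'cnt, hN'prod⟩
    · intro h0
      rw [h0] at hnjN'; exact absurd hnjN' (Multiset.notMem_zero _)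
    · intro x hx
      exact hNpos x (mem_reduceAt hx).1
  -- the max of N'
  have hne : N'.toFinset.Nonempty := ⟨nj, Multiset.mem_toFinset.mpr hnjN'⟩
  set s' : ℕ := N'.toFinset.max' hne with hs'
  have hs'N' : s' ∈ N' := Multiset.mem_toFinset.mp (Finset.max'_mem _ hne)
  have hs'lt : s' < s := by
    obtain ⟨hmemN, hnes⟩ := mem_reduceAt hs'N'
    have := hNbound s' hmemN
    omega
  have : gm m nj ≤ s' := by
    apply Nat.sInf_le
    refine ⟨N', hN'seq, hnjN', hs'N', ?_⟩
    intro x hx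
    exact ⟨(hNbound x (mem_reduceAt hx).1).1, Finset.le_max' _ x (Multiset.mem_toFinset.mpr hx)⟩
  omega

theorem stmt_19 (m : ℕ) (hm : 2 ≤ m) (k : ℕ) (ns : Fin k → ℕ)
    (hpos : ∀ i, 0 < ns i) (hmono : StrictMono ns)
    (heq : ∀ i j, gm m (ns i) = gm m (ns j)) :
    k < m.divisors.card := by
  classical
  have hmne : m ≠ 0 := by omega
  have hmdiv : m ∈ m.divisors := Nat.mem_divisors_self m hmne
  have hcard_pos : 0 < m.divisors.card := Finset.card_pos.mpr ⟨m, hmdiv⟩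
  rcases Nat.eq_zero_or_pos k with hk | hk
  · omega
  · set i0 : Fin k := ⟨0, hk⟩
    set s : ℕ := gm m (ns i0) with hs
    have choice : ∀ i : Fin k, ∃ M : Multiset ℕ,
        IsMProdSeq m M ∧ ns i ∈ M ∧ s ∈ M ∧ ∀ a ∈ M, ns i ≤ a ∧ a ≤ s := by
      intro i
      have h := Nat.sInf_mem (gmSet_nonempty m (ns i) hm (hpos i))
      have hgi : gm m (ns i) = s := heq i i0
      rw [gm] at hgi
      rw [← hgi]
      exact h
    choose M hMseq hMn hMs hMb using choice
    set r : Fin k → ℕ := fun i => (M i).count s with hr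
    set d : Fin k → ℕ := fun i => Nat.gcd (r i) m with hd
    have hr1 : ∀ i, 1 ≤ r i ∧ r i < m := by
      intro i
      exact ⟨Multiset.count_pos.mpr (hMs i), (hMseq i).2.2.1 s⟩
    have hkey : ∀ i j : Fin k, ns j < ns i → ¬ (d i ∣ r j) := by
      intro i j hji hdvd
      have := key_lemma m s (ns j) (ns i) hm hji (M i) (M j) (hMseq i) (hMseq j)
        (hMn i) (hMb i) (hMn j) (hMb j) hdvd
      have hgj : gm m (ns j) = s := heq j i0
      omega
    have hinj : Function.Injective d := by
      intro i j hij
      rcases lt_trichotomy i j with h | h | h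
      · exfalso
        exact hkey j i (hmono h) (hij ▸ Nat.gcd_dvd_left (r i) m)
      · exact h
      · exfalso
        exact hkey i j (hmono h) (hij ▸ Nat.gcd_dvd_left (r j) m)
    have hdm : ∀ i, d i ∈ m.divisors.erase m := by
      intro i
      rw [Finset.mem_erase]
      constructor
      · intro hdi
        have : m ∣ r i := hdi ▸ Nat.gcd_dvd_left (r i) m
        have := Nat.le_of_dvd (hr1 i).1 this
        have := (hr1 i).2
        omega
      · exact Nat.mem_divisors.mpr ⟨Nat.gcd_dvd_right (r i) m, hmne⟩
    have hle : k ≤ (m.divisors.erase m).card := by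
      have := Finset.card_le_card_of_injOn (s := (Finset.univ : Finset (Fin k)))
        (t := m.divisors.erase m) d (fun i _ => hdm i) (Function.Injective.injOn hinj)
      simpa using this
    have herase : (m.divisors.erase m).card = m.divisors.card - 1 :=
      Finset.card_erase_of_mem hmdiv
    omega
end
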